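/- arXiv:1011.4693 — 6 statements merged into one kernel-verified Lean document; each statement's English description precedes it below -/
import Mathlib

section
/- Let k ≥ 1. For every x ∈ [0,1]^{k−1} and every t ∈ [0,1], the point Θ_k(x,t) lies in the simplex Δ_k; moreover Θ_k(x,0) = v_k = (1,1,…,1) and Θ_k(x,1) = v_0 = (0,0,…,0). In other words, Igusa's map Θ_k sends each x ∈ [0,1]^{k−1} to a path in Δ_k starting at the last vertex v_k and ending at the zeroth vertex v_0. -/
noncomputable section
open MeasureTheory Set

/-- The simplex `Δ_n = {t ∈ ℝ^n : 1 ≥ t_1 ≥ t_2 ≥ … ≥ t_n ≥ 0}`. -/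
def ordSimplex (n : ℕ) : Set (Fin n → ℝ) :=
  {t | (∀ i, 0 ≤ t i) ∧ (∀ i, t i ≤ 1) ∧ ∀ i j : Fin n, i ≤ j → t j ≤ t i}

/-- The `i`-th vertex `v_i = (1,…,1,0,…,0)` of `Δ_n` (`i` ones followed by `n-i` zeros). -/
def vertex (n i : ℕ) : Fin n → ℝ := fun j => if (j : ℕ) < i then 1 else 0

/-- The map `λ_k : [0,1]^{k-1} × [0,1] → [0,1]^k`; in closed form, its `m`-th coordinate
(1-based `m = i+1`, with `x_k := 1`) is `x_m · clamp_{[0,1]}((k−m+1) − k·t)`, which agrees with the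
piecewise description: for `t ∈ [(k−j)/k, (k−j+1)/k]`,
`λ_k(x,t) = (x_1, …, x_{j−1}, ((k−j+1) − kt)·x_j, 0, …, 0)`. -/
def lambdaMap (k : ℕ) (x : Fin (k - 1) → ℝ) (t : ℝ) : Fin k → ℝ :=
  fun i => (if h : (i : ℕ) < k - 1 then x ⟨(i : ℕ), h⟩ else 1) *
    max 0 (min 1 ((k : ℝ) - ((i : ℕ) : ℝ) - (k : ℝ) * t))

/-- `π_k : [0,1]^k → ℝ^k`, `(π_k(x))_i = max{x_i, …, x_k}`. -/
def piMap {k : ℕ} (y : Fin k → ℝ) : Fin k → ℝ :=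
  fun i => (Finset.univ.filter (fun j => i ≤ j)).sup'
    ⟨i, Finset.mem_filter.mpr ⟨Finset.mem_univ i, le_rfl⟩⟩ y

/-- Igusa's map `Θ_k := π_k ∘ λ_k : [0,1]^{k−1} × [0,1] → ℝ^k`. -/
def Theta (k : ℕ) (x : Fin (k - 1) → ℝ) (t : ℝ) : Fin k → ℝ := piMap (lambdaMap k x t)

lemma lambda_mem (k : ℕ) (x : Fin (k - 1) → ℝ)
    (hx : ∀ i, x i ∈ Set.Icc (0 : ℝ) 1) (t : ℝ) (i : Fin k) :
    lambdaMap k x t i ∈ Set.Icc (0 : ℝ) 1 := by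
  unfold lambdaMap
  have hc : (if h : (i : ℕ) < k - 1 then x ⟨(i : ℕ), h⟩ else 1) ∈ Set.Icc (0:ℝ) 1 := by
    split
    · exact hx _
    · exact ⟨zero_le_one, le_refl 1⟩
  have hm0 : (0:ℝ) ≤ max 0 (min 1 ((k : ℝ) - ((i : ℕ) : ℝ) - (k : ℝ) * t)) := le_max_left _ _
  have hm1 : max 0 (min 1 ((k : ℝ) - ((i : ℕ) : ℝ) - (k : ℝ) * t)) ≤ 1 :=
    max_le zero_le_one (min_le_left _ _)
  constructor
  · exact mul_nonneg hc.1 hm0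
  · calc _ ≤ 1 * 1 := mul_le_mul hc.2 hm1 hm0 zero_le_one
       _ = 1 := by ring

/-- For `k ≥ 1`, `x ∈ [0,1]^{k−1}` and `t ∈ [0,1]`, the point `Θ_k(x,t)` lies in `Δ_k`;
moreover `Θ_k(x,0) = v_k` and `Θ_k(x,1) = v_0`. -/
theorem stmt0 (k : ℕ) (hk : 1 ≤ k) (x : Fin (k - 1) → ℝ)
    (hx : ∀ i, x i ∈ Set.Icc (0 : ℝ) 1) (t : ℝ) (ht : t ∈ Set.Icc (0 : ℝ) 1) :
    Theta k x t ∈ ordSimplex k ∧ Theta k x 0 = vertex k k ∧ Theta k x 1 = vertex k 0 := by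
  have hne : ∀ i : Fin k, (Finset.univ.filter (fun j => i ≤ j)).Nonempty :=
    fun i => ⟨i, Finset.mem_filter.mpr ⟨Finset.mem_univ i, le_rfl⟩⟩
  refine ⟨⟨?_, ?_, ?_⟩, ?_, ?_⟩
  · intro i
    exact le_trans (lambda_mem k x hx t i).1 (Finset.le_sup' _
      (Finset.mem_filter.mpr ⟨Finset.mem_univ i, le_rfl⟩))
  · intro i
    exact Finset.sup'_le (hne i) _ fun j _ => (lambda_mem k x hx t j).2
  · intro i j hij
    apply Finset.sup'_le (hne j)
    intro l hl
    exact Finset.le_sup' _ (Finset.mem_filter.mpr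
      ⟨Finset.mem_univ l, le_trans hij (Finset.mem_filter.mp hl).2⟩)
  · funext i
    have hone : Theta k x 0 i ≤ 1 :=
      Finset.sup'_le (hne i) _ fun j _ => (lambda_mem k x hx 0 j).2
    have hlast : lambdaMap k x 0 ⟨k - 1, Nat.sub_lt hk one_pos⟩ = 1 := by
      unfold lambdaMap
      rw [dif_neg (lt_irrefl _)]
      have h1 : (1:ℝ) ≤ (k : ℝ) - ((k - 1 : ℕ) : ℝ) - (k : ℝ) * 0 := by
        have : ((k - 1 : ℕ) : ℝ) = (k : ℝ) - 1 := by
          push_cast [Nat.cast_sub hk]; ring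
        rw [this]; ring_nf; norm_num
      rw [min_eq_left h1, max_eq_right zero_le_one, one_mul]
    have hle : (1:ℝ) ≤ Theta k x 0 i := by
      rw [← hlast]
      apply Finset.le_sup'
      refine Finset.mem_filter.mpr ⟨Finset.mem_univ _, ?_⟩
      exact Fin.le_def.mpr (by simpa using Nat.le_sub_one_of_lt i.isLt)
    have : Theta k x 0 i = 1 := le_antisymm hone hle
    rw [this, vertex, if_pos i.isLt]
  · funext i
    have hub : Theta k x 1 i ≤ 0 := by
      apply Finset.sup'_le (hne i)
      intro j _
      unfold lambdaMap
      have : min 1 ((k : ℝ) - ((j : ℕ) : ℝ) - (k : ℝ) * 1) ≤ 0 := by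
        refine le_trans (min_le_right _ _) ?_
        have hjk : ((j : ℕ) : ℝ) ≤ (k : ℝ) := by exact_mod_cast le_of_lt j.isLt
        nlinarith
      rw [mul_comm, max_eq_left this, zero_mul]
    have hlb : 0 ≤ Theta k x 1 i :=
      le_trans (lambda_mem k x hx 1 i).1 (Finset.le_sup' _
        (Finset.mem_filter.mpr ⟨Finset.mem_univ i, le_rfl⟩))
    have : Theta k x 1 i = 0 := le_antisymm hub hlb
    rw [this, vertex, if_neg (Nat.not_lt_zero _)]
end
end

section
/- Let k ≥ 2 and 1 ≤ i ≤ k−1. For every x ∈ [0,1]^{k−2} and every t ∈ [0,1], Θ_k(∂_i^+(x), t) = μ_i( Θ_i((x_1,…,x_{i−1}), ·), Θ_{k−i}((x_i,…,x_{k−2}), ·) )(t), where ∂_i^+(x) := (x_1,…,x_{i−1}, 1, x_i,…,x_{k−2}) inserts a 1 in the i-th slot. That is, Igusa's map on the i-th top face of the cube is the concatenation μ_i of the lower-dimensional Igusa maps. -/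
noncomputable section
open MeasureTheory Set

/-- Extension of a finite tuple by `0` outside its range. -/
def extF {m : ℕ} (x : Fin m → ℝ) (n : ℕ) : ℝ := if h : n < m then x ⟨n, h⟩ else 0

/-- Insertion of the constant `c` in the `i`-th slot (1-based):
`(x_1,…,x_{i−1}, c, x_i,…,x_{k−2}) ∈ ℝ^{k-1}` for `x ∈ ℝ^{k-2}`. -/
def insertCoord (k i : ℕ) (c : ℝ) (x : Fin (k - 1 - 1) → ℝ) : Fin (k - 1) → ℝ :=
  fun m => if (m : ℕ) + 1 < i then extF x (m : ℕ)
    else if (m : ℕ) + 1 = i then c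
    else extF x ((m : ℕ) - 1)

/-- `U_{k−i} : Δ_{k−i} → Δ_k`, `s ↦ (1,…,1,s_1,…,s_{k−i})` (`i` leading ones). -/
def UMap (k i : ℕ) (s : Fin (k - i) → ℝ) : Fin k → ℝ :=
  fun j => if (j : ℕ) < i then 1 else extF s ((j : ℕ) - i)

/-- `V_i : Δ_i → Δ_k`, `s ↦ (s_1,…,s_i,0,…,0)`. -/
def VMap (k i : ℕ) (s : Fin i → ℝ) : Fin k → ℝ := fun j => extF s (j : ℕ)

/-- The concatenation `μ_i(α,β) : [0,1] → ℝ^k`: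
`μ_i(α,β)(t) = U_{k−i}(β(kt/(k−i)))` for `0 ≤ t ≤ (k−i)/k` and
`μ_i(α,β)(t) = V_i(α((k/i)(t − (k−i)/k)))` for `(k−i)/k ≤ t ≤ 1`. -/
def muMap (k i : ℕ) (α : ℝ → Fin i → ℝ) (β : ℝ → Fin (k - i) → ℝ) (t : ℝ) : Fin k → ℝ :=
  if t ≤ ((k : ℝ) - (i : ℝ)) / k then UMap k i (β ((k : ℝ) * t / ((k : ℝ) - (i : ℝ))))
  else VMap k i (α (((k : ℝ) / (i : ℝ)) * (t - ((k : ℝ) - (i : ℝ)) / k)))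

lemma extF_mem {m : ℕ} {x : Fin m → ℝ} (hx : ∀ j, x j ∈ Set.Icc (0:ℝ) 1) (n : ℕ) :
    extF x n ∈ Set.Icc (0:ℝ) 1 := by
  unfold extF; split
  · exact hx _
  · exact ⟨le_rfl, zero_le_one⟩

lemma clamp_nonneg (s : ℝ) : 0 ≤ max 0 (min 1 s) := le_max_left _ _
lemma clamp_le_one (s : ℝ) : max 0 (min 1 s) ≤ 1 := max_le zero_le_one (min_le_left _ _)
lemma clamp_of_one_le {s : ℝ} (h : 1 ≤ s) : max 0 (min 1 s) = 1 := by
  rw [min_eq_left h, max_eq_right zero_le_one]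
lemma clamp_of_nonpos {s : ℝ} (h : s ≤ 0) : max 0 (min 1 s) = 0 := by
  rw [min_eq_right (h.trans zero_le_one), max_eq_left h]

lemma lambdaMap_nonneg {k : ℕ} {x : Fin (k-1) → ℝ} (hx : ∀ j, x j ∈ Set.Icc (0:ℝ) 1)
    (t : ℝ) (b : Fin k) : 0 ≤ lambdaMap k x t b := by
  refine mul_nonneg ?_ (clamp_nonneg _)
  split
  · exact (hx _).1
  · exact zero_le_one

lemma lambdaMap_le_one {k : ℕ} {x : Fin (k-1) → ℝ} (hx : ∀ j, x j ∈ Set.Icc (0:ℝ) 1)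
    (t : ℝ) (b : Fin k) : lambdaMap k x t b ≤ 1 := by
  refine mul_le_one₀ ?_ (clamp_nonneg _) (clamp_le_one _)
  split
  · exact (hx _).2
  · exact le_rfl
/-- For `k ≥ 2`, `1 ≤ i ≤ k−1`, `x ∈ [0,1]^{k−2}` and `t ∈ [0,1]`:
`Θ_k(∂_i^+(x), t) = μ_i(Θ_i((x_1,…,x_{i−1}),·), Θ_{k−i}((x_i,…,x_{k−2}),·))(t)`,
where `∂_i^+` inserts a `1` in the `i`-th slot. -/
theorem stmt2 (k i : ℕ) (hk : 2 ≤ k) (hi1 : 1 ≤ i) (hi2 : i ≤ k - 1)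
    (x : Fin (k - 1 - 1) → ℝ) (hx : ∀ j, x j ∈ Set.Icc (0 : ℝ) 1)
    (t : ℝ) (ht : t ∈ Set.Icc (0 : ℝ) 1) :
    Theta k (insertCoord k i 1 x) t
      = muMap k i (fun s => Theta i (fun m => extF x (m : ℕ)) s)
          (fun s => Theta (k - i) (fun m => extF x ((m : ℕ) + (i - 1))) s) t := by
  have hik : i < k := by omega
  have hkR : (0:ℝ) < (k:ℝ) := by exact_mod_cast (by omega : 0 < k)
  have hiR : (0:ℝ) < (i:ℝ) := by exact_mod_cast hi1
  have hikR : (i:ℝ) < (k:ℝ) := by exact_mod_cast hik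
  have hkiR : (0:ℝ) < (k:ℝ) - (i:ℝ) := by linarith
  set y := insertCoord k i 1 x with hy'
  have hy : ∀ m, y m ∈ Set.Icc (0:ℝ) 1 := by
    intro m
    simp only [hy', insertCoord]
    split
    · exact extF_mem hx _
    · split
      · exact ⟨zero_le_one, le_rfl⟩
      · exact extF_mem hx _
  funext a
  by_cases htle : t ≤ ((k:ℝ) - (i:ℝ)) / (k:ℝ)
  · have hKt : (k:ℝ) * t ≤ (k:ℝ) - (i:ℝ) := by
      rw [mul_comm]
      exact (le_div_iff₀ hkR).mp htle
    rw [muMap, if_pos htle]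
    by_cases hai : (a:ℕ) < i
    · -- left part: value 1
      rw [show UMap k i ((fun s => Theta (k - i) (fun m => extF x ((m : ℕ) + (i - 1))) s)
            ((k:ℝ) * t / ((k:ℝ) - (i:ℝ)))) a = 1 from by rw [UMap, if_pos hai]]
      simp only [Theta, piMap]
      apply le_antisymm
      · exact Finset.sup'_le _ _ fun b _ => lambdaMap_le_one hy t b
      · have hlt : i - 1 < k := by omega
        have hmem : (⟨i-1, hlt⟩ : Fin k) ∈ Finset.univ.filter (fun j => a ≤ j) :=
          Finset.mem_filter.mpr ⟨Finset.mem_univ _, by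
            rw [Fin.le_def]; simp only []; omega⟩
        have hval : lambdaMap k y t ⟨i-1, hlt⟩ = 1 := by
          rw [lambdaMap]
          simp only []
          rw [dif_pos (show i - 1 < k - 1 by omega)]
          have hcoef : y ⟨i-1, by omega⟩ = 1 := by
            simp only [hy', insertCoord]
            rw [if_neg (by omega), if_pos (by omega)]
          rw [hcoef, one_mul]
          apply clamp_of_one_le
          have : ((i-1 : ℕ):ℝ) = (i:ℝ) - 1 := by
            push_cast [Nat.cast_sub hi1]; ring
          rw [this]
          linarith
        calc (1:ℝ) = lambdaMap k y t ⟨i-1, hlt⟩ := hval.symm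
          _ ≤ _ := Finset.le_sup' _ hmem
    · -- right part
      have hia : i ≤ (a:ℕ) := not_lt.mp hai
      rw [show UMap k i ((fun s => Theta (k - i) (fun m => extF x ((m : ℕ) + (i - 1))) s)
            ((k:ℝ) * t / ((k:ℝ) - (i:ℝ)))) a
          = Theta (k-i) (fun m => extF x ((m : ℕ) + (i - 1)))
              ((k:ℝ) * t / ((k:ℝ) - (i:ℝ))) ⟨(a:ℕ) - i, by omega⟩ from by
        rw [UMap, if_neg hai]
        simp only [extF]
        rw [dif_pos (show (a:ℕ) - i < k - i by omega)]]
      have hterm : ∀ (b : Fin k) (hb : i ≤ (b:ℕ)),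
          lambdaMap k y t b
            = lambdaMap (k-i) (fun m => extF x ((m : ℕ) + (i - 1)))
                ((k:ℝ) * t / ((k:ℝ) - (i:ℝ))) ⟨(b:ℕ) - i, by omega⟩ := by
        intro b hb
        simp only [lambdaMap]
        congr 1
        · by_cases hbk : (b:ℕ) < k - 1
          · rw [dif_pos hbk, dif_pos (show (b:ℕ) - i < k - i - 1 by omega)]
            simp only [hy', insertCoord]
            rw [if_neg (by omega), if_neg (by omega)]
            congr 1
            omega
          · rw [dif_neg hbk, dif_neg (by omega)]
        · congr 1
          rw [Nat.cast_sub hik.le, Nat.cast_sub hb]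
          field_simp
          try ring
      simp only [Theta, piMap]
      apply le_antisymm
      · apply Finset.sup'_le
        intro b hb
        have hab : (a:ℕ) ≤ (b:ℕ) := (Finset.mem_filter.mp hb).2
        rw [hterm b (le_trans hia hab)]
        exact Finset.le_sup' _ (Finset.mem_filter.mpr ⟨Finset.mem_univ _, by
          rw [Fin.le_def]; simp only []; omega⟩)
      · apply Finset.sup'_le
        intro b' hb'
        have hab' : (a:ℕ) - i ≤ (b':ℕ) := (Finset.mem_filter.mp hb').2
        have hbk : (b':ℕ) + i < k := by omega
        have key := hterm ⟨(b':ℕ) + i, hbk⟩ (by simp)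
        have heq : (⟨(⟨(b':ℕ) + i, hbk⟩ : Fin k) - i, by omega⟩ : Fin (k-i)) = b' := by
          apply Fin.ext; simp
        rw [heq] at key
        rw [← key]
        exact Finset.le_sup' _ (Finset.mem_filter.mpr ⟨Finset.mem_univ _, by
          rw [Fin.le_def]; simp only []; omega⟩)
  · have hKt : (k:ℝ) - (i:ℝ) < (k:ℝ) * t := by
      rw [not_le] at htle
      rw [mul_comm]
      exact (div_lt_iff₀ hkR).mp htle
    rw [muMap, if_neg htle]
    have hzero : ∀ b : Fin k, i ≤ (b:ℕ) → lambdaMap k y t b = 0 := by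
      intro b hb
      rw [lambdaMap]
      have hbR : (i:ℝ) ≤ ((b:ℕ):ℝ) := by exact_mod_cast hb
      rw [clamp_of_nonpos (by linarith), mul_zero]
    by_cases hai : (a:ℕ) < i
    · rw [show VMap k i ((fun s => Theta i (fun m => extF x (m : ℕ)) s)
            (((k:ℝ)/(i:ℝ)) * (t - ((k:ℝ) - (i:ℝ))/(k:ℝ)))) a
          = Theta i (fun m => extF x (m : ℕ))
              (((k:ℝ)/(i:ℝ)) * (t - ((k:ℝ) - (i:ℝ))/(k:ℝ))) ⟨(a:ℕ), hai⟩ from by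
        simp only [VMap, extF]
        rw [dif_pos hai]]
      have hterm2 : ∀ (n : ℕ) (hn : n < i),
          lambdaMap k y t ⟨n, Nat.lt_trans hn hik⟩
            = lambdaMap i (fun m => extF x (m : ℕ))
                (((k:ℝ)/(i:ℝ)) * (t - ((k:ℝ) - (i:ℝ))/(k:ℝ))) ⟨n, hn⟩ := by
        intro n hn
        simp only [lambdaMap]
        congr 1
        · by_cases hn1 : n < i - 1
          · rw [dif_pos (show n < k - 1 by omega), dif_pos hn1]
            simp only [hy', insertCoord]
            rw [if_pos (by omega)]
          · rw [dif_pos (show n < k - 1 by omega), dif_neg hn1]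
            simp only [hy', insertCoord]
            rw [if_neg (by omega), if_pos (by omega)]
        · congr 2
          field_simp
          ring
      simp only [Theta, piMap]
      apply le_antisymm
      · apply Finset.sup'_le
        intro b hb
        have hab : (a:ℕ) ≤ (b:ℕ) := (Finset.mem_filter.mp hb).2
        by_cases hbi : (b:ℕ) < i
        · have key := hterm2 (b:ℕ) hbi
          rw [Fin.eta] at key
          rw [key]
          exact Finset.le_sup' _ (Finset.mem_filter.mpr ⟨Finset.mem_univ _, by
            rw [Fin.le_def]; simp only []; omega⟩)
        · rw [hzero b (not_lt.mp hbi)]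
          refine le_trans (lambdaMap_nonneg (k := i) (x := fun m => extF x (m : ℕ))
            (fun j => extF_mem hx _) (((k:ℝ)/(i:ℝ)) * (t - ((k:ℝ) - (i:ℝ))/(k:ℝ))) ⟨(a:ℕ), hai⟩) ?_
          exact Finset.le_sup' _ (Finset.mem_filter.mpr ⟨Finset.mem_univ _, le_rfl⟩)
      · apply Finset.sup'_le
        intro b' hb'
        have hab' : (a:ℕ) ≤ (b':ℕ) := (Finset.mem_filter.mp hb').2
        have key := hterm2 (b':ℕ) b'.2
        rw [Fin.eta] at key
        rw [← key]
        exact Finset.le_sup' _ (Finset.mem_filter.mpr ⟨Finset.mem_univ _, by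
          rw [Fin.le_def]; simp only []; omega⟩)
    · have hia : i ≤ (a:ℕ) := not_lt.mp hai
      rw [show VMap k i ((fun s => Theta i (fun m => extF x (m : ℕ)) s)
            (((k:ℝ)/(i:ℝ)) * (t - ((k:ℝ) - (i:ℝ))/(k:ℝ)))) a = 0 from by
        simp only [VMap, extF]
        rw [dif_neg (by omega)]]
      simp only [Theta, piMap]
      apply le_antisymm
      · apply Finset.sup'_le
        intro b hb
        have hab : (a:ℕ) ≤ (b:ℕ) := (Finset.mem_filter.mp hb).2
        exact le_of_eq (hzero b (by omega))
      · calc (0:ℝ) = lambdaMap k y t a := (hzero a hia).symm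
          _ ≤ _ := Finset.le_sup' _ (Finset.mem_filter.mpr ⟨Finset.mem_univ _, le_rfl⟩)
end
end

section
/- Fix integers n ≥ 1 and 0 < i < k, and let 0 ≤ l ≤ n. The affine map γ_l : Δ_l × Δ_{n−l} → ℝ^n is a bijection from Δ_l × Δ_{n−l} onto Δ_n(l), and its linear part has determinant (i/k)^l · ((k−i)/k)^{n−l} > 0; in particular γ_l is injective and orientation preserving. -/
noncomputable section
open MeasureTheory Set

/-- The affine map `γ_l : Δ_l × Δ_{n−l} → ℝ^n`,
`γ_l(u,v) = ((i/k)u_1 + (k−i)/k, …, (i/k)u_l + (k−i)/k, ((k−i)/k)v_1, …, ((k−i)/k)v_{n−l})`. -/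
def gammaMap (n i k l : ℕ) (u : Fin l → ℝ) (v : Fin (n - l) → ℝ) : Fin n → ℝ :=
  fun m => if (m : ℕ) < l then ((i : ℝ) / k) * extF u (m : ℕ) + ((k : ℝ) - (i : ℝ)) / k
    else (((k : ℝ) - (i : ℝ)) / k) * extF v ((m : ℕ) - l)

/-- `Δ_n(l) = {t ∈ ℝ^n : 1 ≥ t_1 ≥ … ≥ t_l ≥ (k−i)/k ≥ t_{l+1} ≥ … ≥ t_n ≥ 0}`. -/
def simplexPart (n k i l : ℕ) : Set (Fin n → ℝ) :=
  {t | (∀ m, 0 ≤ t m) ∧ (∀ m, t m ≤ 1) ∧ (∀ m m' : Fin n, m ≤ m' → t m' ≤ t m) ∧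
    (∀ m : Fin n, (m : ℕ) < l → ((k : ℝ) - (i : ℝ)) / k ≤ t m) ∧
    (∀ m : Fin n, l ≤ (m : ℕ) → t m ≤ ((k : ℝ) - (i : ℝ)) / k)}

/-- Concatenation of `u ∈ ℝ^l` and `v ∈ ℝ^{n-l}` into a vector in `ℝ^n`. -/
def concatF (n l : ℕ) (u : Fin l → ℝ) (v : Fin (n - l) → ℝ) : Fin n → ℝ :=
  fun m => if (m : ℕ) < l then extF u (m : ℕ) else extF v ((m : ℕ) - l)

/-! `γ_l` is the concatenation of two affine maps, `u ↦ (i/k) u + (k−i)/k` and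
`v ↦ ((k−i)/k) v`. Since `i/k + (k−i)/k = 1`, they carry `Δ_l` onto the antitone `l`-tuples with
values in `[(k−i)/k, 1]` and `Δ_{n−l}` onto the antitone `(n−l)`-tuples with values in
`[0, (k−i)/k]`; the concatenations of such pairs of tuples are exactly the points of `Δ_n(l)`.
The linear part of `γ_l` is diagonal, so its determinant is the product of its diagonal entries. -/

open Function

def antitoneIcc (m : ℕ) (lo hi : ℝ) : Set (Fin m → ℝ) :=
  {t | Antitone t ∧ ∀ j, t j ∈ Icc lo hi}

theorem ordSimplex_eq_antitoneIcc (m : ℕ) : ordSimplex m = antitoneIcc m 0 1 := by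
  ext t
  simp only [ordSimplex, antitoneIcc, mem_ofPred_eq, mem_Icc, forall_and]
  exact ⟨fun ⟨h0, h1, ha⟩ => ⟨ha, h0, h1⟩, fun ⟨ha, h0, h1⟩ => ⟨h0, h1, ha⟩⟩

theorem affine_mem_antitoneIcc_iff {m : ℕ} {p : ℝ} (hp : 0 < p) (q : ℝ) (u : Fin m → ℝ) :
    (fun j => p * u j + q) ∈ antitoneIcc m q (p + q) ↔ u ∈ antitoneIcc m 0 1 := by
  simp [antitoneIcc, Antitone, mul_le_mul_iff_right₀ hp, mul_nonneg_iff_of_pos_left hp,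
    mul_le_iff_le_one_right hp]

theorem affine_bijective {m : ℕ} {p : ℝ} (hp : p ≠ 0) (q : ℝ) :
    Bijective fun (u : Fin m → ℝ) j => p * u j + q := by
  refine ⟨fun u u' h => funext fun j => ?_, fun t => ⟨fun j => (t j - q) / p, ?_⟩⟩
  · simpa [hp] using congrFun h j
  · funext j
    field_simp
    ring

section concatF

variable {n l : ℕ} (x : Fin l → ℝ) (y : Fin (n - l) → ℝ)

theorem concatF_of_lt {m : Fin n} (hm : (m : ℕ) < l) : concatF n l x y m = x ⟨m, hm⟩ := by
  simp [concatF, extF, hm]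

theorem concatF_of_le {m : Fin n} (hm : l ≤ (m : ℕ)) :
    concatF n l x y m = y ⟨m - l, by omega⟩ := by
  simp [concatF, extF, not_lt.2 hm, show (m : ℕ) - l < n - l by omega]

theorem concatF_left (hl : l ≤ n) (j : Fin l) : concatF n l x y ⟨j, by omega⟩ = x j :=
  concatF_of_lt x y j.2

theorem concatF_right (j : Fin (n - l)) : concatF n l x y ⟨l + j, by omega⟩ = y j := by
  rw [concatF_of_le x y (m := ⟨l + j, _⟩) (Nat.le_add_right l j)]
  simp

theorem concatF_bijective (hl : l ≤ n) :
    Bijective fun p : (Fin l → ℝ) × (Fin (n - l) → ℝ) => concatF n l p.1 p.2 := by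
  refine ⟨fun ⟨x, y⟩ ⟨x', y'⟩ h => ?_,
    fun t => ⟨(fun j => t ⟨j, by omega⟩, fun j => t ⟨l + j, by omega⟩), ?_⟩⟩
  · have hx : x = x' := funext fun j => by
      simpa only [concatF_left _ _ hl] using congrFun h ⟨j, by omega⟩
    have hy : y = y' := funext fun j => by
      simpa only [concatF_right] using congrFun h ⟨l + j, by omega⟩
    rw [hx, hy]
  · funext m
    rcases lt_or_ge (m : ℕ) l with hm | hm
    · simp [concatF_of_lt _ _ hm]
    · simp [concatF_of_le _ _ hm, Nat.add_sub_cancel' hm]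

theorem concatF_mem_simplexPart_iff {k i : ℕ} (hik : i ≤ k) (hl : l ≤ n) :
    concatF n l x y ∈ simplexPart n k i l ↔
      x ∈ antitoneIcc l (((k : ℝ) - i) / k) 1 ∧ y ∈ antitoneIcc (n - l) 0 (((k : ℝ) - i) / k) := by
  set c : ℝ := ((k : ℝ) - i) / k
  have hc0 : 0 ≤ c := div_nonneg (sub_nonneg.2 (by exact_mod_cast hik)) k.cast_nonneg
  have hc1 : c ≤ 1 := div_le_one_of_le₀ (by linarith [i.cast_nonneg (α := ℝ)]) k.cast_nonneg
  constructor
  · rintro ⟨h0, h1, hanti, hupper, hlower⟩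
    refine ⟨⟨fun j j' hjj => ?_, fun j => ⟨?_, ?_⟩⟩, ⟨fun j j' hjj => ?_, fun j => ⟨?_, ?_⟩⟩⟩
    · simpa only [concatF_left _ _ hl] using hanti ⟨j, by omega⟩ ⟨j', by omega⟩ hjj
    · simpa only [concatF_left _ _ hl] using hupper ⟨j, by omega⟩ j.2
    · simpa only [concatF_left _ _ hl] using h1 ⟨j, by omega⟩
    · simpa only [concatF_right] using
        hanti ⟨l + j, by omega⟩ ⟨l + j', by omega⟩ (Fin.mk_le_mk.2 (by simpa using hjj))
    · simpa only [concatF_right] using h0 ⟨l + j, by omega⟩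
    · simpa only [concatF_right] using hlower ⟨l + j, by omega⟩ (by simp)
  · rintro ⟨⟨hxa, hx⟩, ⟨hya, hy⟩⟩
    have hleft (m : Fin n) (hm : (m : ℕ) < l) : concatF n l x y m ∈ Icc c 1 := by
      simpa only [concatF_of_lt _ _ hm] using hx ⟨m, hm⟩
    have hright (m : Fin n) (hm : l ≤ (m : ℕ)) : concatF n l x y m ∈ Icc 0 c := by
      simpa only [concatF_of_le _ _ hm] using hy ⟨m - l, by omega⟩
    have hbounds (m : Fin n) : concatF n l x y m ∈ Icc 0 1 := by
      rcases lt_or_ge (m : ℕ) l with hm | hm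
      · exact Icc_subset_Icc hc0 le_rfl (hleft m hm)
      · exact Icc_subset_Icc le_rfl hc1 (hright m hm)
    refine ⟨fun m => (hbounds m).1, fun m => (hbounds m).2, fun m m' hmm' => ?_,
      fun m hm => (hleft m hm).1, fun m hm => (hright m hm).2⟩
    have hmm'' : (m : ℕ) ≤ m' := hmm'
    rcases lt_or_ge (m' : ℕ) l with hm' | hm'
    · rw [concatF_of_lt _ _ hm', concatF_of_lt _ _ (hmm''.trans_lt hm')]
      exact hxa hmm''
    rcases lt_or_ge (m : ℕ) l with hm | hm
    · exact (hright m' hm').2.trans (hleft m hm).1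
    · rw [concatF_of_le _ _ hm', concatF_of_le _ _ hm]
      exact hya (Fin.mk_le_mk.2 (by omega))

end concatF

theorem gammaMap_eq_concatF (n i k l : ℕ) (u : Fin l → ℝ) (v : Fin (n - l) → ℝ) :
    gammaMap n i k l u v =
      concatF n l (fun j => (i : ℝ) / k * u j + ((k : ℝ) - i) / k)
        (fun j => ((k : ℝ) - i) / k * v j) := by
  funext m
  rcases lt_or_ge (m : ℕ) l with hm | hm
  · simp [gammaMap, concatF_of_lt _ _ hm, extF, hm]
  · simp [gammaMap, concatF_of_le _ _ hm, extF, not_lt.2 hm, show (m : ℕ) - l < n - l by omega]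

theorem gammaMap_eq_diagonal_mulVec_add (n i k l : ℕ) (u : Fin l → ℝ) (v : Fin (n - l) → ℝ) :
    gammaMap n i k l u v =
      (Matrix.diagonal fun m : Fin n =>
          if (m : ℕ) < l then (i : ℝ) / k else ((k : ℝ) - (i : ℝ)) / k).mulVec (concatF n l u v) +
        fun m : Fin n => if (m : ℕ) < l then ((k : ℝ) - (i : ℝ)) / k else 0 := by
  funext m
  simp only [gammaMap, concatF, Pi.add_apply, Matrix.mulVec_diagonal]
  split_ifs <;> ring

theorem det_diagonal_ite_lt {R : Type*} [CommRing R] {n l : ℕ} (hl : l ≤ n) (a b : R) :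
    (Matrix.diagonal fun m : Fin n => if (m : ℕ) < l then a else b).det = a ^ l * b ^ (n - l) := by
  obtain ⟨d, rfl⟩ := Nat.exists_eq_add_of_le hl
  rw [Matrix.det_diagonal, Fin.prod_univ_eq_prod_range (fun m => if m < l then a else b),
    Finset.prod_range_add]
  simp [Finset.prod_ite_of_true]

theorem cast_div_pos_and_sub_div_pos {i k : ℕ} (hi0 : 0 < i) (hik : i < k) :
    0 < (i : ℝ) / k ∧ 0 < ((k : ℝ) - i) / k := by
  have hik' : (i : ℝ) < k := by exact_mod_cast hik
  have hk : (0 : ℝ) < k := by exact_mod_cast hi0.trans hik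
  exact ⟨by positivity, div_pos (sub_pos.2 hik') hk⟩

section gammaMap

variable {n i k l : ℕ} (hi0 : 0 < i) (hik : i < k) (hl : l ≤ n)
include hi0 hik hl

theorem gammaMap_bijective :
    Bijective fun p : (Fin l → ℝ) × (Fin (n - l) → ℝ) => gammaMap n i k l p.1 p.2 := by
  obtain ⟨ha, hb⟩ := cast_div_pos_and_sub_div_pos hi0 hik
  have hv : Bijective fun (v : Fin (n - l) → ℝ) j => ((k : ℝ) - i) / k * v j := by
    simpa using affine_bijective (m := n - l) hb.ne' 0
  convert (concatF_bijective hl).comp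
    ((affine_bijective ha.ne' (((k : ℝ) - i) / k)).prodMap hv) using 1
  exact funext fun p => gammaMap_eq_concatF n i k l p.1 p.2

theorem gammaMap_mem_simplexPart_iff (u : Fin l → ℝ) (v : Fin (n - l) → ℝ) :
    gammaMap n i k l u v ∈ simplexPart n k i l ↔ u ∈ ordSimplex l ∧ v ∈ ordSimplex (n - l) := by
  obtain ⟨ha, hb⟩ := cast_div_pos_and_sub_div_pos hi0 hik
  have hsum : (i : ℝ) / k + ((k : ℝ) - i) / k = 1 := by
    rw [← add_div, add_sub_cancel, div_self (by exact_mod_cast (hi0.trans hik).ne')]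
  have hv := affine_mem_antitoneIcc_iff hb 0 v
  simp only [add_zero] at hv
  rw [gammaMap_eq_concatF, concatF_mem_simplexPart_iff _ _ hik.le hl, ← hsum,
    affine_mem_antitoneIcc_iff ha, hv, ordSimplex_eq_antitoneIcc, ordSimplex_eq_antitoneIcc]

theorem gammaMap_bijOn :
    BijOn (fun p : (Fin l → ℝ) × (Fin (n - l) → ℝ) => gammaMap n i k l p.1 p.2)
      (ordSimplex l ×ˢ ordSimplex (n - l)) (simplexPart n k i l) := by
  convert (gammaMap_bijective hi0 hik hl).bijOn_preimage
  ext ⟨u, v⟩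
  exact (gammaMap_mem_simplexPart_iff hi0 hik hl u v).symm

end gammaMap

theorem stmt4_general (n i k l : ℕ) (hi0 : 0 < i) (hik : i < k) (hl : l ≤ n) :
    Set.BijOn (fun p : (Fin l → ℝ) × (Fin (n - l) → ℝ) => gammaMap n i k l p.1 p.2)
      (ordSimplex l ×ˢ ordSimplex (n - l)) (simplexPart n k i l) ∧
    (∀ (u : Fin l → ℝ) (v : Fin (n - l) → ℝ),
      gammaMap n i k l u v =
        (Matrix.diagonal fun m : Fin n =>
            if (m : ℕ) < l then (i : ℝ) / k else ((k : ℝ) - (i : ℝ)) / k).mulVec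
          (concatF n l u v) +
        (fun m : Fin n => if (m : ℕ) < l then ((k : ℝ) - (i : ℝ)) / k else 0)) ∧
    (Matrix.diagonal fun m : Fin n =>
        if (m : ℕ) < l then (i : ℝ) / k else ((k : ℝ) - (i : ℝ)) / k).det
      = ((i : ℝ) / k) ^ l * (((k : ℝ) - (i : ℝ)) / k) ^ (n - l) ∧
    0 < ((i : ℝ) / k) ^ l * (((k : ℝ) - (i : ℝ)) / k) ^ (n - l) ∧
    Function.Injective
      (fun p : (Fin l → ℝ) × (Fin (n - l) → ℝ) => gammaMap n i k l p.1 p.2) := by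
  obtain ⟨ha, hb⟩ := cast_div_pos_and_sub_div_pos hi0 hik
  exact ⟨gammaMap_bijOn hi0 hik hl, gammaMap_eq_diagonal_mulVec_add n i k l,
    det_diagonal_ite_lt hl _ _, by positivity, (gammaMap_bijective hi0 hik hl).injective⟩

/-- `γ_l` is a bijection from `Δ_l × Δ_{n−l}` onto `Δ_n(l)`; it is affine with linear part the
diagonal matrix with entries `i/k` (`l` times) and `(k−i)/k` (`n−l` times), whose determinant is
`(i/k)^l ((k−i)/k)^{n−l} > 0`; in particular `γ_l` is injective and orientation preserving. -/
theorem stmt4 (n i k l : ℕ) (hn : 1 ≤ n) (hi0 : 0 < i) (hik : i < k) (hl : l ≤ n) :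
    Set.BijOn (fun p : (Fin l → ℝ) × (Fin (n - l) → ℝ) => gammaMap n i k l p.1 p.2)
      (ordSimplex l ×ˢ ordSimplex (n - l)) (simplexPart n k i l) ∧
    (∀ (u : Fin l → ℝ) (v : Fin (n - l) → ℝ),
      gammaMap n i k l u v =
        (Matrix.diagonal fun m : Fin n =>
            if (m : ℕ) < l then (i : ℝ) / k else ((k : ℝ) - (i : ℝ)) / k).mulVec
          (concatF n l u v) +
        (fun m : Fin n => if (m : ℕ) < l then ((k : ℝ) - (i : ℝ)) / k else 0)) ∧
    (Matrix.diagonal fun m : Fin n =>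
        if (m : ℕ) < l then (i : ℝ) / k else ((k : ℝ) - (i : ℝ)) / k).det
      = ((i : ℝ) / k) ^ l * (((k : ℝ) - (i : ℝ)) / k) ^ (n - l) ∧
    0 < ((i : ℝ) / k) ^ l * (((k : ℝ) - (i : ℝ)) / k) ^ (n - l) ∧
    Function.Injective
      (fun p : (Fin l → ℝ) × (Fin (n - l) → ℝ) => gammaMap n i k l p.1 p.2) :=
  stmt4_general n i k l hi0 hik hl
end
end

section
/- Let n ≥ 1, let E be a real Banach space, let g : Δ_n → E be continuous, and let φ : [0,1] → [0,1] be a monotone nondecreasing continuously differentiable function with φ(0) = 0 and φ(1) = 1. Then ∫_{Δ_n} g(φ(t_1), …, φ(t_n)) · φ′(t_1)⋯φ′(t_n) dt_1⋯dt_n = ∫_{Δ_n} g(t_1,…,t_n) dt_1⋯dt_n, where both sides are Bochner integrals with respect to Lebesgue measure on Δ_n ⊂ ℝ^n. (This is the invariance of simplex integrals under reparametrization, which underlies the reparametrization invariance of differential forms in the image of Chen's map.) -/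
noncomputable section
open MeasureTheory Set

/-!
The coordinatewise map `Φ t = (φ (t i))ᵢ` sends the simplex onto itself (a monotone right
inverse of `φ`, built from the intermediate value theorem, gives surjectivity), and its Jacobian
determinant is `∏ i, φ' (t i) ≥ 0`. On the part `s` of the simplex where every `φ' (t i)` is
positive, `Φ` is injective, since `φ x < φ y` whenever `x < y` and `φ' x > 0`; the change of
variables formula then turns the left-hand integral over `s` into `∫_{Φ '' s} g`. On the rest of
the simplex the Jacobian vanishes, so that part contributes nothing to the left-hand side and its
image under `Φ` is Lebesgue-null; hence `Φ '' s` has full measure in the simplex.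
-/

lemma ContinuousOn.exists_monotoneOn_rightInvOn {f : ℝ → ℝ} {a b : ℝ} (hab : a ≤ b)
    (hf : ContinuousOn f (Icc a b)) :
    ∃ g : ℝ → ℝ, MonotoneOn g (Icc (f a) (f b)) ∧ MapsTo g (Icc (f a) (f b)) (Icc a b) ∧
      RightInvOn g f (Icc (f a) (f b)) := by
  set S : ℝ → Set ℝ := fun c => Icc a b ∩ f ⁻¹' Ici c
  have hS_bdd (c : ℝ) : BddBelow (S c) := bddBelow_Icc.mono inter_subset_left
  have hS_mem {c : ℝ} (hc : c ∈ Icc (f a) (f b)) : sInf (S c) ∈ S c :=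
    (hf.preimage_isClosed_of_isClosed isClosed_Icc isClosed_Ici).csInf_mem
      ⟨b, right_mem_Icc.2 hab, hc.2⟩ (hS_bdd c)
  refine ⟨fun c => sInf (S c), fun c hc c' hc' hcc' => ?_, fun c hc => (hS_mem hc).1,
    fun c hc => ?_⟩
  · exact csInf_le_csInf (hS_bdd c) ⟨_, hS_mem hc'⟩ fun x hx => ⟨hx.1, hcc'.trans hx.2⟩
  · -- the least `x` with `c ≤ f x` has `f x = c`, by the intermediate value theorem on `[a, x]`
    obtain ⟨⟨hax, hxb⟩, hcx⟩ := hS_mem hc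
    obtain ⟨y, hy, hfy⟩ := intermediate_value_Icc hax (hf.mono (Icc_subset_Icc_right hxb))
      ⟨hc.1, hcx⟩
    have : sInf (S c) ≤ y := csInf_le (hS_bdd c) ⟨⟨hy.1, hy.2.trans hxb⟩, hfy.ge⟩
    rwa [le_antisymm hy.2 this] at hfy

lemma MonotoneOn.strictMonoOn_of_hasDerivWithinAt_pos {f f' : ℝ → ℝ} {a b : ℝ}
    (hf : MonotoneOn f (Icc a b))
    (hderiv : ∀ x ∈ Icc a b, HasDerivWithinAt f (f' x) (Icc a b) x) :
    StrictMonoOn f {x ∈ Icc a b | 0 < f' x} := by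
  intro x hx y hy hxy
  refine (hf hx.1 hy.1 hxy.le).lt_of_ne fun hfxy => hx.2.ne' ?_
  have hIcc : Icc x y ⊆ Icc a b := Icc_subset_Icc hx.1.1 hy.1.2
  have hconst : EqOn f (fun _ => f x) (Icc x y) := fun z hz =>
    le_antisymm (hfxy ▸ hf (hIcc hz) hy.1 hz.2) (hf hx.1 (hIcc hz) hz.1)
  have hx_mem : x ∈ Icc x y := left_mem_Icc.2 hxy.le
  exact (uniqueDiffOn_Icc hxy x hx_mem).eq_deriv _ ((hderiv x hx.1).mono hIcc)
    ((hasDerivWithinAt_const x (Icc x y) (f x)).congr_of_mem hconst hx_mem)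

open ContinuousLinearMap in
lemma hasFDerivWithinAt_pi_comp_apply {ι : Type*} [Fintype ι] {φ φ' : ℝ → ℝ} {s : Set ℝ}
    {T : Set (ι → ℝ)} {x : ι → ℝ} (hφ : ∀ i, HasDerivWithinAt φ (φ' (x i)) s (x i))
    (hT : ∀ t ∈ T, ∀ i, t i ∈ s) :
    HasFDerivWithinAt (fun t i => φ (t i))
      (pi fun i => (smulRight (1 : ℝ →L[ℝ] ℝ) (φ' (x i))).comp (proj i)) T x :=
  hasFDerivWithinAt_pi.2 fun i =>
    (hφ i).hasFDerivWithinAt.comp x (hasFDerivWithinAt_apply i x T) fun t ht => hT t ht i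

open ContinuousLinearMap in
lemma det_pi_smulRight_comp_proj {ι : Type*} [Fintype ι] (a : ι → ℝ) :
    (pi fun i => (smulRight (1 : ℝ →L[ℝ] ℝ) (a i)).comp (proj i)).det = ∏ i, a i := by
  simp [det_pi]

lemma ContinuousOn.measurableSet_inter_preimage {α β : Type*} [TopologicalSpace α]
    [MeasurableSpace α] [OpensMeasurableSpace α] [TopologicalSpace β] {f : α → β}
    {s : Set α} {t : Set β} (hf : ContinuousOn f s) (hs : MeasurableSet s) (ht : IsOpen t) :
    MeasurableSet (s ∩ f ⁻¹' t) := by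
  obtain ⟨u, hu, hfu⟩ := continuousOn_iff'.1 hf t ht
  rw [inter_comm, hfu]
  exact hu.measurableSet.inter hs

lemma image_ae_eq_image_of_measure_image_sdiff_eq_zero {α β : Type*} [MeasurableSpace β]
    {μ : Measure β} {f : α → β} {s t : Set α} (hst : s ⊆ t) (h : μ (f '' (t \ s)) = 0) :
    f '' s =ᵐ[μ] f '' t := by
  refine ae_eq_set.2 ⟨by rw [sdiff_eq_empty.2 (image_mono hst), measure_empty], ?_⟩
  refine measure_mono_null ?_ h
  rintro _ ⟨⟨x, hx, rfl⟩, hxs⟩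
  exact ⟨x, ⟨hx, fun h => hxs ⟨x, h, rfl⟩⟩, rfl⟩

lemma isClosed_ordSimplex (n : ℕ) : IsClosed (ordSimplex n) := by
  simp only [ordSimplex, ofPred_and, ofPred_forall]
  exact (isClosed_iInter fun i => isClosed_le continuous_const (continuous_apply i)).inter
    ((isClosed_iInter fun i => isClosed_le (continuous_apply i) continuous_const).inter
      (isClosed_iInter fun i => isClosed_iInter fun j => isClosed_iInter fun _ =>
        isClosed_le (continuous_apply j) (continuous_apply i)))

section ordSimplex

variable {n : ℕ} {φ φ' : ℝ → ℝ}

lemma mem_Icc_of_mem_ordSimplex {t : Fin n → ℝ} (ht : t ∈ ordSimplex n) (i : Fin n) :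
    t i ∈ Icc 0 1 :=
  ⟨ht.1 i, ht.2.1 i⟩

lemma mapsTo_ordSimplex (hmono : MonotoneOn φ (Icc 0 1))
    (hmaps : MapsTo φ (Icc 0 1) (Icc 0 1)) :
    MapsTo (fun t i => φ (t i)) (ordSimplex n) (ordSimplex n) := fun _ ht =>
  ⟨fun i => (hmaps (mem_Icc_of_mem_ordSimplex ht i)).1,
    fun i => (hmaps (mem_Icc_of_mem_ordSimplex ht i)).2,
    fun i j hij => hmono (mem_Icc_of_mem_ordSimplex ht j) (mem_Icc_of_mem_ordSimplex ht i)
      (ht.2.2 i j hij)⟩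

lemma image_ordSimplex (hmono : MonotoneOn φ (Icc 0 1)) (hcont : ContinuousOn φ (Icc 0 1))
    (h0 : φ 0 = 0) (h1 : φ 1 = 1) :
    (fun t i => φ (t i)) '' ordSimplex n = ordSimplex n := by
  have hmaps : MapsTo φ (Icc 0 1) (Icc 0 1) := fun x hx =>
    ⟨h0 ▸ hmono (left_mem_Icc.2 zero_le_one) hx hx.1,
      h1 ▸ hmono hx (right_mem_Icc.2 zero_le_one) hx.2⟩
  refine (mapsTo_ordSimplex hmono hmaps).image_subset.antisymm fun t ht => ?_
  obtain ⟨ψ, hψ_mono, hψ_maps, hψ_inv⟩ := hcont.exists_monotoneOn_rightInvOn zero_le_one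
  rw [h0, h1] at hψ_mono hψ_maps hψ_inv
  exact ⟨fun i => ψ (t i), mapsTo_ordSimplex hψ_mono hψ_maps ht,
    funext fun i => hψ_inv (mem_Icc_of_mem_ordSimplex ht i)⟩

lemma hasFDerivWithinAt_of_subset_ordSimplex
    (hderiv : ∀ t ∈ Icc (0 : ℝ) 1, HasDerivWithinAt φ (φ' t) (Icc 0 1) t)
    {T : Set (Fin n → ℝ)} (hT : T ⊆ ordSimplex n) {x : Fin n → ℝ} (hx : x ∈ T) :
    HasFDerivWithinAt (fun t i => φ (t i))
      (ContinuousLinearMap.pi fun i => (ContinuousLinearMap.smulRight (1 : ℝ →L[ℝ] ℝ)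
        (φ' (x i))).comp (ContinuousLinearMap.proj i)) T x :=
  hasFDerivWithinAt_pi_comp_apply (fun i => hderiv _ (mem_Icc_of_mem_ordSimplex (hT hx) i))
    fun _ ht => mem_Icc_of_mem_ordSimplex (hT ht)

lemma prod_eq_zero_of_mem_ordSimplex_of_notMem_pi (hmono : MonotoneOn φ (Icc 0 1))
    (hderiv : ∀ t ∈ Icc (0 : ℝ) 1, HasDerivWithinAt φ (φ' t) (Icc 0 1) t)
    {t : Fin n → ℝ} (ht : t ∈ ordSimplex n)
    (hpos : t ∉ univ.pi fun _ => {x ∈ Icc 0 1 | 0 < φ' x}) :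
    ∏ i, φ' (t i) = 0 := by
  obtain ⟨i, hi⟩ : ∃ i, ¬ 0 < φ' (t i) := by
    by_contra! h
    exact hpos fun i _ => ⟨mem_Icc_of_mem_ordSimplex ht i, h i⟩
  have hti := mem_Icc_of_mem_ordSimplex ht i
  have hnonneg : 0 ≤ φ' (t i) :=
    (hderiv _ hti).derivWithin (uniqueDiffOn_Icc one_pos _ hti) ▸ hmono.derivWithin_nonneg
  exact Finset.prod_eq_zero (Finset.mem_univ i) ((not_lt.1 hi).antisymm hnonneg)

end ordSimplex

theorem stmt7_general (n : ℕ) {E : Type*} [NormedAddCommGroup E] [NormedSpace ℝ E]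
    (g : (Fin n → ℝ) → E)
    (φ φ' : ℝ → ℝ)
    (hmono : MonotoneOn φ (Set.Icc 0 1))
    (hderiv : ∀ t ∈ Set.Icc (0 : ℝ) 1, HasDerivWithinAt φ (φ' t) (Set.Icc 0 1) t)
    (hcont : ContinuousOn φ' (Set.Icc 0 1))
    (h0 : φ 0 = 0) (h1 : φ 1 = 1) :
    ∫ t in ordSimplex n, (∏ i : Fin n, φ' (t i)) • g (fun i => φ (t i))
      = ∫ t in ordSimplex n, g t := by
  set Φ : (Fin n → ℝ) → Fin n → ℝ := fun t i => φ (t i)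
  set V : Set ℝ := {x ∈ Icc 0 1 | 0 < φ' x}
  set s := ordSimplex n ∩ univ.pi fun _ => V
  have hΔ : MeasurableSet (ordSimplex n) := (isClosed_ordSimplex n).measurableSet
  have hs : MeasurableSet s :=
    hΔ.inter (.univ_pi fun _ => hcont.measurableSet_inter_preimage measurableSet_Icc isOpen_Ioi)
  have hinj : InjOn Φ s := fun a ha b hb hab => funext fun i =>
    (hmono.strictMonoOn_of_hasDerivWithinAt_pos hderiv).injOn (ha.2 i trivial) (hb.2 i trivial)
      (congrFun hab i)
  have hJ_zero : ∀ t ∈ ordSimplex n \ s, ∏ i, φ' (t i) = 0 := fun t ht =>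
    prod_eq_zero_of_mem_ordSimplex_of_notMem_pi hmono hderiv ht.1 fun h => ht.2 ⟨ht.1, h⟩
  have himage : Φ '' s =ᵐ[volume] ordSimplex n := by
    rw [← image_ordSimplex hmono (fun x hx => (hderiv x hx).continuousWithinAt) h0 h1]
    refine image_ae_eq_image_of_measure_image_sdiff_eq_zero inter_subset_left ?_
    exact addHaar_image_eq_zero_of_det_fderivWithin_eq_zero volume
      (fun x => hasFDerivWithinAt_of_subset_ordSimplex hderiv sdiff_subset)
      fun x hx => (det_pi_smulRight_comp_proj _).trans (hJ_zero x hx)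
  calc ∫ t in ordSimplex n, (∏ i, φ' (t i)) • g (Φ t)
      = ∫ t in s, (∏ i, φ' (t i)) • g (Φ t) :=
        setIntegral_eq_of_subset_of_forall_sdiff_eq_zero hΔ inter_subset_left fun t ht => by
          rw [hJ_zero t ht, zero_smul]
    _ = ∫ t in Φ '' s, g t := by
        rw [integral_image_eq_integral_abs_det_fderiv_smul volume hs
          (fun x => hasFDerivWithinAt_of_subset_ordSimplex hderiv inter_subset_left) hinj]
        refine setIntegral_congr_fun hs fun t ht => ?_
        rw [det_pi_smulRight_comp_proj,
          abs_of_nonneg (Finset.prod_nonneg fun i _ => (ht.2 i trivial).2.le)]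
    _ = ∫ t in ordSimplex n, g t := setIntegral_congr_set himage

/-- Invariance of simplex integrals under reparametrization: if `φ : [0,1] → [0,1]` is monotone
nondecreasing, continuously differentiable (with derivative `φ'` on `[0,1]`) and fixes the
endpoints, then for every continuous `g : Δ_n → E` (Banach-valued),
`∫_{Δ_n} g(φ(t_1),…,φ(t_n)) φ'(t_1)⋯φ'(t_n) dt = ∫_{Δ_n} g(t) dt`. -/
theorem stmt7 (n : ℕ) (hn : 1 ≤ n) {E : Type*} [NormedAddCommGroup E] [NormedSpace ℝ E]
    [CompleteSpace E]
    (g : (Fin n → ℝ) → E) (hg : ContinuousOn g (ordSimplex n))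
    (φ φ' : ℝ → ℝ)
    (hmono : MonotoneOn φ (Set.Icc 0 1))
    (hderiv : ∀ t ∈ Set.Icc (0 : ℝ) 1, HasDerivWithinAt φ (φ' t) (Set.Icc 0 1) t)
    (hcont : ContinuousOn φ' (Set.Icc 0 1))
    (h0 : φ 0 = 0) (h1 : φ 1 = 1) :
    ∫ t in ordSimplex n, (∏ i : Fin n, φ' (t i)) • g (fun i => φ (t i))
      = ∫ t in ordSimplex n, g t :=
  stmt7_general n g φ φ' hmono hderiv hcont h0 h1
end
end

section
/- Let A be a real unital Banach algebra and a : [0,1] → A continuous. For t ∈ [0,1] define H_t := 1 + Σ_{n≥1} ∫_{t ≥ t_1 ≥ … ≥ t_n ≥ 0} a(1−t_1)·a(1−t_2)·…·a(1−t_n) dt_1⋯dt_n, where each term is a Bochner integral over {(t_1,…,t_n) ∈ ℝ^n : t ≥ t_1 ≥ … ≥ t_n ≥ 0}. Then the series converges absolutely for every t ∈ [0,1], H_0 = 1, and the map t ↦ H_t is differentiable on [0,1] with H′(t) = a(1−t)·H_t. In particular, H_1 is the parallel transport, i.e. the time-1 value of the solution of the linear ODE X′(t) = a(1−t)·X(t)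 with X(0) = 1. -/
/-!
Write `F n t` for the `n`-fold integral over `t ≥ t₁ ≥ … ≥ tₙ ≥ 0`. Integrating out the
outermost variable `t₁` (Fubini) gives the Volterra recursion `F (n+1) t = ∫₀ᵗ a(1-s) F n s ds`,
so `‖F n t‖ ≤ ‖1‖ (M t)ⁿ / n!` with `M` a bound for `‖a‖` on `[0,1]`. The series therefore
converges uniformly, and termwise integration turns the recursion into the integral equation
`H t = 1 + ∫₀ᵗ a(1-s) H s ds`, from which the derivative follows by the fundamental theorem of
calculus. The ODE is linear with a bounded coefficient, hence Lipschitz, so its solution is unique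
by Grönwall.
-/

noncomputable section
open MeasureTheory Set

/-- The ordered set `{t ∈ ℝ^n : c ≥ t_1 ≥ … ≥ t_n ≥ b}`. -/
def ordSet (n : ℕ) (b c : ℝ) : Set (Fin n → ℝ) :=
  {t | (∀ i, b ≤ t i ∧ t i ≤ c) ∧ ∀ i j : Fin n, i ≤ j → t j ≤ t i}

/-- `H_t := 1 + Σ_{n≥1} ∫_{t ≥ t_1 ≥ … ≥ t_n ≥ 0} a(1−t_1)·…·a(1−t_n) dt`. -/
def Hmap {A : Type*} [NormedRing A] [NormedAlgebra ℝ A] [CompleteSpace A]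
    (a : ℝ → A) (t : ℝ) : A :=
  1 + ∑' n : ℕ, ∫ x in ordSet (n + 1) 0 t, (List.ofFn fun i : Fin (n + 1) => a (1 - x i)).prod

theorem isClosed_ordSet (n : ℕ) (b c : ℝ) : IsClosed (ordSet n b c) := by
  simp only [ordSet, ofPred_and, ofPred_forall]
  exact (isClosed_iInter fun i => (isClosed_le continuous_const (continuous_apply i)).inter
      (isClosed_le (continuous_apply i) continuous_const)).inter
    (isClosed_iInter fun i => isClosed_iInter fun j => isClosed_iInter fun _ =>
      isClosed_le (continuous_apply j) (continuous_apply i))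

theorem isCompact_ordSet (n : ℕ) (b c : ℝ) : IsCompact (ordSet n b c) :=
  (isCompact_Icc (a := fun _ => b) (b := fun _ => c)).of_isClosed_subset (isClosed_ordSet n b c)
    fun _ hx => ⟨fun i => (hx.1 i).1, fun i => (hx.1 i).2⟩

theorem mem_ordSet_succ_iff {n : ℕ} {b c : ℝ} {x : Fin (n + 1) → ℝ} :
    x ∈ ordSet (n + 1) b c ↔ x 0 ∈ Icc b c ∧ Fin.tail x ∈ ordSet n b (x 0) := by
  constructor
  · rintro ⟨hbound, hanti⟩
    exact ⟨hbound 0, fun j => ⟨(hbound j.succ).1, hanti 0 j.succ (Fin.zero_le _)⟩,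
      fun i j hij => hanti i.succ j.succ (Fin.succ_le_succ_iff.mpr hij)⟩
  · rintro ⟨⟨hb, hc⟩, htail, hanti⟩
    refine ⟨Fin.cases ⟨hb, hc⟩ fun j => ⟨(htail j).1, (htail j).2.trans hc⟩, ?_⟩
    intro i j hij
    induction j using Fin.cases with
    | zero => rw [Fin.le_zero_iff.mp hij]
    | succ j =>
      induction i using Fin.cases with
      | zero => exact (htail j).2
      | succ i => exact hanti i j (Fin.succ_le_succ_iff.mp hij)

theorem setIntegral_ordSet_succ {E : Type*} [NormedAddCommGroup E] [NormedSpace ℝ E]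
    {n : ℕ} {b c : ℝ} (hbc : b ≤ c) {f : (Fin (n + 1) → ℝ) → E}
    (hf : IntegrableOn f (ordSet (n + 1) b c)) :
    ∫ x in ordSet (n + 1) b c, f x = ∫ s in b..c, ∫ y in ordSet n b s, f (Fin.cons s y) := by
  set e := MeasurableEquiv.piFinSuccAbove (fun _ : Fin (n + 1) => ℝ) 0
  have he : MeasurePreserving e := volume_preserving_piFinSuccAbove _ 0
  set T : Set (ℝ × (Fin n → ℝ)) := {p | p.1 ∈ Icc b c ∧ p.2 ∈ ordSet n b p.1}
  set g : ℝ × (Fin n → ℝ) → E := fun p => f (Fin.cons p.1 p.2)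
  have hS : ordSet (n + 1) b c = e ⁻¹' T := by
    ext x; exact mem_ordSet_succ_iff
  have hfg : f = g ∘ e := funext fun x => by simp [g, e, Fin.cons_self_tail]
  have hT : MeasurableSet T := by
    rw [← e.symm_preimage_preimage T, ← hS]
    exact e.symm.measurable (isClosed_ordSet _ _ _).measurableSet
  have hgT : IntegrableOn g T := by
    rwa [hS, hfg, he.integrableOn_comp_preimage e.measurableEmbedding] at hf
  have hslice : ∀ s, ∫ y, T.indicator g (s, y) =
      (Icc b c).indicator (fun s => ∫ y in ordSet n b s, g (s, y)) s := by
    intro s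
    by_cases hs : s ∈ Icc b c
    · rw [indicator_of_mem hs, ← integral_indicator (isClosed_ordSet _ _ _).measurableSet]
      congr 1 with y
      by_cases hy : y ∈ ordSet n b s
      · rw [indicator_of_mem (show (s, y) ∈ T from ⟨hs, hy⟩), indicator_of_mem hy]
      · rw [indicator_of_notMem (fun h => hy h.2), indicator_of_notMem hy]
    · rw [indicator_of_notMem hs]
      exact integral_eq_zero_of_ae (ae_of_all _ fun y => indicator_of_notMem (fun h => hs h.1) _)
  calc ∫ x in ordSet (n + 1) b c, f x = ∫ p in T, g p := by
        rw [hS, hfg]; exact he.setIntegral_preimage_emb e.measurableEmbedding g T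
    _ = ∫ s, ∫ y, T.indicator g (s, y) := by
        rw [← integral_indicator hT]; exact integral_prod _ ((integrable_indicator_iff hT).2 hgT)
    _ = ∫ s in b..c, ∫ y in ordSet n b s, g (s, y) := by
        rw [integral_congr_ae (ae_of_all _ hslice), integral_indicator measurableSet_Icc,
          intervalIntegral.integral_of_le hbc, integral_Icc_eq_integral_Ioc]

theorem continuousOn_list_ofFn_prod {X M : Type*} [TopologicalSpace X] [Monoid M]
    [TopologicalSpace M] [ContinuousMul M] {n : ℕ} {f : Fin n → X → M} {s : Set X}
    (hf : ∀ i, ContinuousOn (f i) s) :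
    ContinuousOn (fun x => (List.ofFn fun i => f i x).prod) s := by
  induction n with
  | zero => simpa using continuousOn_const
  | succ n ih =>
    simp only [List.ofFn_succ, List.prod_cons]
    exact (hf 0).mul (ih fun i => hf i.succ)

theorem hasDerivWithinAt_integral_Icc {E : Type*} [NormedAddCommGroup E] [NormedSpace ℝ E]
    [CompleteSpace E] {f : ℝ → E} {a b t : ℝ} (hf : ContinuousOn f (Icc a b))
    (ht : t ∈ Icc a b) : HasDerivWithinAt (fun u => ∫ x in a..u, f x) (f t) (Icc a b) t := by
  have := Fact.mk ht
  exact intervalIntegral.integral_hasDerivWithinAt_right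
    (hf.mono (uIcc_subset_Icc (left_mem_Icc.2 (ht.1.trans ht.2)) ht)).intervalIntegrable
    (hf.stronglyMeasurableAtFilter_nhdsWithin measurableSet_Icc t) (hf t ht)

theorem eqOn_of_hasDerivWithinAt_mul_left {A : Type*} [NormedRing A] [NormedSpace ℝ A]
    {c f g : ℝ → A} {t₀ t₁ M : ℝ} (hc : ∀ t ∈ Icc t₀ t₁, ‖c t‖ ≤ M)
    (hf : ∀ t ∈ Icc t₀ t₁, HasDerivWithinAt f (c t * f t) (Icc t₀ t₁) t)
    (hg : ∀ t ∈ Icc t₀ t₁, HasDerivWithinAt g (c t * g t) (Icc t₀ t₁) t)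
    (h₀ : f t₀ = g t₀) : EqOn f g (Icc t₀ t₁) := by
  have hlip : ∀ t ∈ Ico t₀ t₁, LipschitzOnWith M.toNNReal (fun x => c t * x) univ :=
    fun t ht => LipschitzWith.lipschitzOnWith <| .of_dist_le_mul fun x y => by
      rw [dist_eq_norm, dist_eq_norm, ← mul_sub]
      exact (norm_mul_le _ _).trans (mul_le_mul_of_nonneg_right
        ((hc t (Ico_subset_Icc_self ht)).trans (Real.le_coe_toNNReal M)) (norm_nonneg _))
  have hright : ∀ h : ℝ → A,
      (∀ t ∈ Icc t₀ t₁, HasDerivWithinAt h (c t * h t) (Icc t₀ t₁) t) →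
      ∀ t ∈ Ico t₀ t₁, HasDerivWithinAt h (c t * h t) (Ici t) t := fun h hh t ht =>
    (hh t (Ico_subset_Icc_self ht)).mono_of_mem_nhdsWithin (Icc_mem_nhdsGE_of_mem ht)
  exact ODE_solution_unique_of_mem_Icc_right (v := fun t x => c t * x) (s := fun _ => univ) hlip
    (fun t ht => (hf t ht).continuousWithinAt) (hright f hf) (fun _ _ => mem_univ _)
    (fun t ht => (hg t ht).continuousWithinAt) (hright g hg) (fun _ _ => mem_univ _) h₀

theorem ContinuousOn.comp_one_sub {β : Type*} [TopologicalSpace β] {f : ℝ → β}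
    (hf : ContinuousOn f (Icc 0 1)) : ContinuousOn (fun s => f (1 - s)) (Icc 0 1) :=
  hf.comp (continuousOn_const.sub continuousOn_id) fun _ => Icc.mem_iff_one_sub_mem.1

section Dyson

variable {A : Type*} [NormedRing A] {a : ℝ → A}

theorem integrableOn_ordSet_prod (ha : ContinuousOn a (Icc 0 1)) (n : ℕ) {t : ℝ} (ht : t ≤ 1) :
    IntegrableOn (fun x : Fin n → ℝ => (List.ofFn fun i => a (1 - x i)).prod) (ordSet n 0 t) :=
  (continuousOn_list_ofFn_prod fun i => ha.comp_one_sub.comp (continuous_apply i).continuousOn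
    fun _ hx => ⟨(hx.1 i).1, (hx.1 i).2.trans ht⟩).integrableOn_compact (isCompact_ordSet n 0 t)

variable [NormedAlgebra ℝ A]

def dysonTerm (a : ℝ → A) (n : ℕ) (t : ℝ) : A :=
  ∫ x in ordSet n 0 t, (List.ofFn fun i : Fin n => a (1 - x i)).prod

theorem dysonTerm_succ (ha : ContinuousOn a (Icc 0 1)) (n : ℕ) {t : ℝ} (ht : t ∈ Icc 0 1) :
    dysonTerm a (n + 1) t = ∫ s in 0..t, a (1 - s) * dysonTerm a n s := by
  rw [dysonTerm, setIntegral_ordSet_succ ht.1 (integrableOn_ordSet_prod ha _ ht.2)]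
  refine intervalIntegral.integral_congr fun s hs => ?_
  rw [uIcc_of_le ht.1] at hs
  simp only [List.ofFn_succ, Fin.cons_zero, Fin.cons_succ, List.prod_cons]
  exact integral_const_mul_of_integrable (integrableOn_ordSet_prod ha n (hs.2.trans ht.2))

variable [CompleteSpace A]

theorem dysonTerm_zero (a : ℝ → A) (t : ℝ) : dysonTerm a 0 t = 1 := by
  simp [dysonTerm, ordSet, measureReal_def, volume_pi]

theorem continuousOn_dysonTerm (ha : ContinuousOn a (Icc 0 1)) (n : ℕ) :
    ContinuousOn (dysonTerm a n) (Icc 0 1) := by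
  induction n with
  | zero => exact continuousOn_const.congr fun t _ => dysonTerm_zero a t
  | succ n ih =>
    have hprimitive :
        ContinuousOn (fun u => ∫ s in 0..u, a (1 - s) * dysonTerm a n s) (Icc 0 1) :=
      fun t ht => (hasDerivWithinAt_integral_Icc (ha.comp_one_sub.mul ih) ht).continuousWithinAt
    exact hprimitive.congr fun t ht => dysonTerm_succ ha n ht

section Bounded

variable {M : ℝ} (hM : ∀ s ∈ Icc (0 : ℝ) 1, ‖a s‖ ≤ M)
include hM

theorem norm_dysonTerm_le (ha : ContinuousOn a (Icc 0 1)) (n : ℕ) {t : ℝ} (ht : t ∈ Icc 0 1) :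
    ‖dysonTerm a n t‖ ≤ ‖(1 : A)‖ * (M ^ n * t ^ n / n.factorial) := by
  have hM0 : 0 ≤ M := (norm_nonneg _).trans (hM 0 (left_mem_Icc.2 zero_le_one))
  induction n generalizing t with
  | zero => simp [dysonTerm_zero]
  | succ n ih =>
    have hbound : ∀ s ∈ Ioc 0 t, ‖a (1 - s) * dysonTerm a n s‖ ≤
        ‖(1 : A)‖ * M ^ (n + 1) / n.factorial * s ^ n := fun s hs => by
      have hs' : s ∈ Icc 0 1 := ⟨hs.1.le, hs.2.trans ht.2⟩
      calc ‖a (1 - s) * dysonTerm a n s‖ ≤ M * (‖(1 : A)‖ * (M ^ n * s ^ n / n.factorial)) :=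
            (norm_mul_le _ _).trans (mul_le_mul (hM _ (Icc.mem_iff_one_sub_mem.1 hs'))
              (ih hs') (norm_nonneg _) hM0)
        _ = _ := by ring
    rw [dysonTerm_succ ha n ht]
    refine (intervalIntegral.norm_integral_le_of_norm_le ht.1 (ae_of_all _ hbound)
      ((intervalIntegral.intervalIntegrable_pow n).const_mul _)).trans_eq ?_
    rw [intervalIntegral.integral_const_mul, integral_pow, Nat.factorial_succ]
    push_cast
    field_simp
    ring

theorem norm_dysonTerm_le_of_mem_Icc (ha : ContinuousOn a (Icc 0 1)) (n : ℕ) {t : ℝ}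
    (ht : t ∈ Icc 0 1) : ‖dysonTerm a n t‖ ≤ ‖(1 : A)‖ * (M ^ n / n.factorial) := by
  have hM0 : 0 ≤ M := (norm_nonneg _).trans (hM 0 (left_mem_Icc.2 zero_le_one))
  refine (norm_dysonTerm_le hM ha n ht).trans ?_
  gcongr
  exact mul_le_of_le_one_right (by positivity) (pow_le_one₀ ht.1 ht.2)

theorem summable_norm_dysonTerm (ha : ContinuousOn a (Icc 0 1)) {t : ℝ} (ht : t ∈ Icc 0 1) :
    Summable fun n => ‖dysonTerm a n t‖ :=
  ((Real.summable_pow_div_factorial M).mul_left _).of_nonneg_of_le (fun _ => norm_nonneg _)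
    fun n => norm_dysonTerm_le_of_mem_Icc hM ha n ht

theorem Hmap_eq_tsum (ha : ContinuousOn a (Icc 0 1)) {t : ℝ} (ht : t ∈ Icc 0 1) :
    Hmap a t = ∑' n, dysonTerm a n t := by
  rw [(summable_norm_dysonTerm hM ha ht).of_norm.tsum_eq_zero_add, dysonTerm_zero]
  rfl

theorem continuousOn_Hmap (ha : ContinuousOn a (Icc 0 1)) : ContinuousOn (Hmap a) (Icc 0 1) :=
  (continuousOn_tsum (continuousOn_dysonTerm ha) ((Real.summable_pow_div_factorial M).mul_left _)
    fun n _ ht => norm_dysonTerm_le_of_mem_Icc hM ha n ht).congr fun _ ht => Hmap_eq_tsum hM ha ht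

theorem Hmap_eq_one_add_integral (ha : ContinuousOn a (Icc 0 1)) {t : ℝ} (ht : t ∈ Icc 0 1) :
    Hmap a t = 1 + ∫ s in 0..t, a (1 - s) * Hmap a s := by
  have hM0 : 0 ≤ M := (norm_nonneg _).trans (hM 0 (left_mem_Icc.2 zero_le_one))
  have hIoc : ∀ s ∈ uIoc 0 t, s ∈ Icc (0 : ℝ) 1 := fun s hs => by
    rw [uIoc_of_le ht.1] at hs
    exact ⟨hs.1.le, hs.2.trans ht.2⟩
  have hsum : HasSum (fun n => ∫ s in 0..t, a (1 - s) * dysonTerm a n s)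
      (∫ s in 0..t, a (1 - s) * Hmap a s) := by
    refine intervalIntegral.hasSum_integral_of_dominated_convergence
      (fun n _ => M * (‖(1 : A)‖ * (M ^ n / n.factorial)))
      (fun n => ((ha.comp_one_sub.mul (continuousOn_dysonTerm ha n)).mono hIoc)
        |>.aestronglyMeasurable measurableSet_uIoc)
      (fun n => ae_of_all _ fun s hs => ?_)
      (ae_of_all _ fun _ _ => ((Real.summable_pow_div_factorial M).mul_left _).mul_left M)
      intervalIntegrable_const (ae_of_all _ fun s hs => ?_)
    · exact (norm_mul_le _ _).trans (mul_le_mul (hM _ (Icc.mem_iff_one_sub_mem.1 (hIoc s hs)))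
        (norm_dysonTerm_le_of_mem_Icc hM ha n (hIoc s hs)) (norm_nonneg _) hM0)
    · rw [Hmap_eq_tsum hM ha (hIoc s hs)]
      exact (summable_norm_dysonTerm hM ha (hIoc s hs)).of_norm.hasSum.mul_left _
  rw [← hsum.tsum_eq]
  exact congrArg (1 + ·) (tsum_congr fun n => dysonTerm_succ ha n ht)

theorem hasDerivWithinAt_Hmap (ha : ContinuousOn a (Icc 0 1)) {t : ℝ} (ht : t ∈ Icc 0 1) :
    HasDerivWithinAt (Hmap a) (a (1 - t) * Hmap a t) (Icc 0 1) t :=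
  ((hasDerivWithinAt_integral_Icc (ha.comp_one_sub.mul (continuousOn_Hmap hM ha)) ht).const_add
    1).congr (fun _ hs => Hmap_eq_one_add_integral hM ha hs) (Hmap_eq_one_add_integral hM ha ht)

end Bounded

theorem Hmap_zero (ha : ContinuousOn a (Icc 0 1)) : Hmap a 0 = 1 := by
  have hterm : ∀ n, dysonTerm a (n + 1) 0 = 0 := fun n => by
    rw [dysonTerm_succ ha n (left_mem_Icc.2 zero_le_one), intervalIntegral.integral_same]
  change 1 + ∑' n, dysonTerm a (n + 1) 0 = 1
  simp [hterm]

end Dyson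

/-- The series defining `H_t` converges absolutely for every `t ∈ [0,1]`, `H_0 = 1`, and
`t ↦ H_t` is differentiable on `[0,1]` with `H′(t) = a(1−t)·H_t`; in particular `H_1` is the
time-1 value of any solution of the linear ODE `X′(t) = a(1−t)·X(t)` with `X(0) = 1`. -/
theorem stmt10 {A : Type*} [NormedRing A] [NormedAlgebra ℝ A] [CompleteSpace A]
    (a : ℝ → A) (ha : ContinuousOn a (Set.Icc 0 1)) :
    (∀ t ∈ Set.Icc (0 : ℝ) 1, Summable fun n : ℕ =>
      ‖∫ x in ordSet (n + 1) 0 t, (List.ofFn fun i : Fin (n + 1) => a (1 - x i)).prod‖) ∧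
    Hmap a 0 = 1 ∧
    (∀ t ∈ Set.Icc (0 : ℝ) 1,
      HasDerivWithinAt (Hmap a) (a (1 - t) * Hmap a t) (Set.Icc 0 1) t) ∧
    (∀ X : ℝ → A, X 0 = 1 →
      (∀ t ∈ Set.Icc (0 : ℝ) 1, HasDerivWithinAt X (a (1 - t) * X t) (Set.Icc 0 1) t) →
      Hmap a 1 = X 1) := by
  obtain ⟨M, hM⟩ := isCompact_Icc.exists_bound_of_continuousOn ha
  have hderiv :
      ∀ t ∈ Icc (0 : ℝ) 1, HasDerivWithinAt (Hmap a) (a (1 - t) * Hmap a t) (Icc 0 1) t :=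
    fun _ ht => hasDerivWithinAt_Hmap hM ha ht
  refine ⟨fun _ ht => (summable_nat_add_iff 1).2 (summable_norm_dysonTerm hM ha ht), Hmap_zero ha,
    hderiv, fun X hX0 hX => ?_⟩
  exact eqOn_of_hasDerivWithinAt_mul_left (fun _ ht => hM _ (Icc.mem_iff_one_sub_mem.1 ht)) hderiv
    hX ((Hmap_zero ha).trans hX0.symm) (right_mem_Icc.2 zero_le_one)
end
end

section
/- Let k ≥ 1 and regard Igusa's map as a map Θ_k : [0,1]^k → Δ_k on the cube with coordinates ordered (t, x_1, …, x_{k−1}), i.e. (t,x) ↦ Θ_k(x,t). Then Θ_k is differentiable at Lebesgue-almost every point of [0,1]^k, and for every continuous function f : Δ_k → ℝ one has ∫_{[0,1]^k} f(Θ_k(x,t)) · det(DΘ_k(t,x)) dt dx = (−1)^k ∫_{Δ_k} f(u) du, where DΘ_k denotes the (almost everywhere defined) total derivative and both integrals are with respect to Lebesgue measure. In particular the degree of the map Θ_k : [0,1]^k → Δ_k is (−1)^k. -/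
noncomputable section
open MeasureTheory Set

/-- The unit cube `[0,1]^k`. -/
def unitCube (k : ℕ) : Set (Fin k → ℝ) := {y | ∀ i, y i ∈ Set.Icc (0 : ℝ) 1}

/-- Igusa's map regarded as a map on the cube `[0,1]^k` with coordinates ordered
`(t, x_1, …, x_{k−1})`, i.e. `(t,x) ↦ Θ_k(x,t)`. -/
def ThetaCube (k : ℕ) (y : Fin k → ℝ) : Fin k → ℝ :=
  Theta k (fun i => extF y ((i : ℕ) + 1)) (extF y 0)

/-!
Write `y = (t, x)` for a point of the cube and `a(y) = (x_1, …, x_{k-1}, 1 - k t)`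
(`igusaAffine`). Where `a(y)` lies in the open simplex, `λ_k(x, t) = a(y)` and `π_k` fixes this
decreasing vector, so `Θ_k = a` near `y`; the linear part of `a` has determinant `(-1)^k k`, and
`a` maps this open set bijectively onto the open simplex, so by the linear change of variables
this part of the integral is `(-1)^k ∫_{Δ_k} f`. At almost every other point of the cube the
Jacobian vanishes: either `k t > 1` and the last coordinate of `Θ_k` is `0` near `y`, or two
adjacent coordinates of `a(y)` are in increasing order and the corresponding coordinates of
`Θ_k` agree near `y`. Almost everywhere differentiability is Rademacher's theorem, `Θ_k` being
Lipschitz on the cube.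
-/

open Filter Topology

section General

variable {E : Type*} [NormedAddCommGroup E] [NormedSpace ℝ E] [FiniteDimensional ℝ E]

theorem LinearMap.det_eq_zero_of_comp_eq_zero {K M : Type*} [Field K] [AddCommGroup M]
    [Module K M] [Module.Finite K M] {f : M →ₗ[K] M} {ℓ : M →ₗ[K] K} (hℓ : ℓ ≠ 0)
    (h : ℓ ∘ₗ f = 0) : LinearMap.det f = 0 := by
  by_contra hdet
  have hf : Function.Surjective f := (Module.End.isUnit_iff f).mp
    ((LinearMap.isUnit_iff_isUnit_det f).mpr (isUnit_iff_ne_zero.mpr hdet)) |>.surjective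
  refine hℓ (LinearMap.ext fun v => ?_)
  obtain ⟨w, rfl⟩ := hf v
  exact LinearMap.congr_fun h w

theorem det_fderiv_eq_zero_of_eventually_eq {Φ : E → E} {x : E} {ℓ : E →L[ℝ] ℝ} (hℓ : ℓ ≠ 0)
    (c : ℝ) (h : ∀ᶠ z in 𝓝 x, ℓ (Φ z) = c) :
    LinearMap.det (fderiv ℝ Φ x : E →ₗ[ℝ] E) = 0 := by
  refine LinearMap.det_eq_zero_of_comp_eq_zero (ℓ := ℓ) (by exact_mod_cast hℓ) ?_
  suffices ℓ.comp (fderiv ℝ Φ x) = 0 by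
    exact_mod_cast congrArg ContinuousLinearMap.toLinearMap this
  by_cases hd : DifferentiableAt ℝ Φ x
  · exact (ℓ.hasFDerivAt.comp x hd.hasFDerivAt).unique
      ((hasFDerivAt_const c x).congr_of_eventuallyEq h)
  · rw [fderiv_zero_of_not_differentiableAt hd, ContinuousLinearMap.comp_zero]

variable [MeasurableSpace E] [BorelSpace E] (μ : Measure E) [μ.IsAddHaarMeasure]

theorem ae_ne_of_linearMap_ne_zero {ℓ : E →ₗ[ℝ] ℝ} (hℓ : ℓ ≠ 0) (c : ℝ) :
    ∀ᵐ y ∂μ, ℓ y ≠ c := by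
  obtain ⟨v, hv⟩ := DFunLike.ne_iff.mp hℓ
  have hv : ℓ v ≠ 0 := hv
  have hlevel : {y | ¬ℓ y ≠ c} = (· + -((c / ℓ v) • v)) ⁻¹' (LinearMap.ker ℓ : Set E) := by
    ext y
    simp [hv, add_neg_eq_zero]
  rw [ae_iff, hlevel, measure_preimage_add_right]
  exact Measure.addHaar_submodule μ _ fun h => hℓ (LinearMap.ker_eq_top.mp h)

theorem LipschitzOnWith.ae_differentiableAt_of_convex {F : Type*} [NormedAddCommGroup F]
    [NormedSpace ℝ F] [FiniteDimensional ℝ F] {f : E → F} {C : NNReal} {s : Set E}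
    (hf : LipschitzOnWith C f s) (hs : Convex ℝ s) :
    ∀ᵐ x ∂μ.restrict s, DifferentiableAt ℝ f x := by
  rw [← Measure.restrict_congr_set (interior_ae_eq_of_null_frontier (hs.addHaar_frontier μ))]
  filter_upwards [ae_restrict_of_ae hf.ae_differentiableWithinAt_of_mem,
    ae_restrict_mem isOpen_interior.measurableSet] with x hdiff hx
  exact (hdiff (interior_subset hx)).differentiableAt (mem_interior_iff_mem_nhds.mp hx)

end General

section Pi

variable {ι : Type*} [Fintype ι]

theorem ae_apply_ne (i : ι) (c : ℝ) : ∀ᵐ u : ι → ℝ, u i ≠ c := by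
  classical
  exact ae_ne_of_linearMap_ne_zero volume (ℓ := LinearMap.proj (R := ℝ) (φ := fun _ => ℝ) i)
    (fun h => by simpa using LinearMap.congr_fun h (Pi.single i 1)) c

theorem ae_injective : ∀ᵐ u : ι → ℝ, Function.Injective u := by
  classical
  refine (ae_all_iff.mpr fun i => ae_all_iff.mpr fun j => ?_).mono fun u hu i j => hu i j
  by_cases hij : i = j
  · exact .of_forall fun _ _ => hij
  let ℓ : (ι → ℝ) →ₗ[ℝ] ℝ := LinearMap.proj (R := ℝ) (φ := fun _ => ℝ) i - LinearMap.proj j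
  have hℓ : ℓ ≠ 0 := fun h => by simpa [ℓ, hij] using LinearMap.congr_fun h (Pi.single i 1)
  filter_upwards [ae_ne_of_linearMap_ne_zero volume hℓ 0] with u hu huij
  exact absurd (by simp [ℓ, huij]) hu

theorem ae_injective_and_apply_ne_zero_one :
    ∀ᵐ u : ι → ℝ, Function.Injective u ∧ ∀ i, u i ≠ 0 ∧ u i ≠ 1 := by
  filter_upwards [ae_injective, ae_all_iff.mpr fun i => ae_apply_ne i 0,
    ae_all_iff.mpr fun i => ae_apply_ne i 1] with u hinj h0 h1
  exact ⟨hinj, fun i => ⟨h0 i, h1 i⟩⟩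

theorem LipschitzOnWith.of_forall_apply {α : Type*} [PseudoEMetricSpace α] {f : α → ι → ℝ}
    {K : NNReal} {s : Set α} (h : ∀ i, LipschitzOnWith K (fun x => f x i) s) :
    LipschitzOnWith K f s :=
  fun _ hx _ hy => edist_pi_le_iff.mpr fun i => h i hx hy

end Pi

theorem LipschitzOnWith.mul_of_abs_le {α : Type*} [PseudoMetricSpace α] {f g : α → ℝ}
    {Kf Kg Mf Mg : NNReal} {s : Set α} (hf : LipschitzOnWith Kf f s) (hg : LipschitzOnWith Kg g s)
    (hfM : ∀ x ∈ s, |f x| ≤ Mf) (hgM : ∀ x ∈ s, |g x| ≤ Mg) :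
    LipschitzOnWith (Mg * Kf + Mf * Kg) (fun x => f x * g x) s := by
  refine LipschitzOnWith.of_dist_le_mul fun x hx y hy => ?_
  have hfd := hf.dist_le_mul x hx y hy
  have hgd := hg.dist_le_mul x hx y hy
  rw [Real.dist_eq] at hfd hgd ⊢
  push_cast
  calc |f x * g x - f y * g y| = |(f x - f y) * g x + f y * (g x - g y)| := by ring_nf
    _ ≤ |f x - f y| * Mg + Mf * |g x - g y| := by
        refine (abs_add_le _ _).trans (add_le_add ?_ ?_) <;> rw [abs_mul]
        · exact mul_le_mul_of_nonneg_left (hgM x hx) (abs_nonneg _)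
        · exact mul_le_mul_of_nonneg_right (hfM y hy) (abs_nonneg _)
    _ ≤ (Mg * Kf + Mf * Kg) * dist x y := by nlinarith [Mf.2, Mg.2]

section piMap

theorem lipschitzWith_piMap (k : ℕ) : LipschitzWith 1 (piMap : (Fin k → ℝ) → Fin k → ℝ) := by
  have hsup (u v : Fin k → ℝ) (i : Fin k) : piMap u i ≤ piMap v i + dist u v :=
    Finset.sup'_le _ _ fun j hj => by
      have huv : |u j - v j| ≤ dist u v := Real.dist_eq _ _ ▸ dist_le_pi_dist u v j
      have hvj : v j ≤ piMap v i := Finset.le_sup' v hj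
      linarith [abs_le.mp huv]
  refine LipschitzWith.of_dist_le_mul fun u v => ?_
  rw [NNReal.coe_one, one_mul, dist_pi_le_iff dist_nonneg]
  intro i
  rw [Real.dist_eq, abs_sub_le_iff]
  constructor <;> linarith [hsup u v i, hsup v u i, dist_comm u v]

theorem piMap_of_antitone {k : ℕ} {v : Fin k → ℝ} (hv : Antitone v) : piMap v = v :=
  funext fun i => le_antisymm (Finset.sup'_le _ _ fun _ hj => hv (Finset.mem_filter.mp hj).2)
    (Finset.le_sup' v (by simp))

variable {n : ℕ}

theorem piMap_last (v : Fin (n + 1) → ℝ) : piMap v (Fin.last n) = v (Fin.last n) :=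
  le_antisymm
    (Finset.sup'_le _ _ fun j hj => by rw [Fin.last_le_iff.mp (Finset.mem_filter.mp hj).2])
    (Finset.le_sup' v (by simp))

theorem piMap_castSucc_of_le {v : Fin (n + 1) → ℝ} {i : Fin n}
    (hle : v i.castSucc ≤ v i.succ) : piMap v i.castSucc = piMap v i.succ := by
  refine le_antisymm (Finset.sup'_le _ _ fun j hj => ?_) (Finset.sup'_le _ _ fun j hj => ?_)
  · rcases (Finset.mem_filter.mp hj).2.eq_or_lt with rfl | hlt
    · exact hle.trans (Finset.le_sup' v (by simp))
    · exact Finset.le_sup' v (by simpa [Fin.castSucc_lt_iff_succ_le] using hlt)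
  · exact Finset.le_sup' v (by
      simpa using (Fin.castSucc_lt_succ (i := i)).le.trans (Finset.mem_filter.mp hj).2)

end piMap

section Lipschitz

theorem lipschitzWith_extF (k m : ℕ) : LipschitzWith 1 fun y : Fin k → ℝ => extF y m := by
  unfold extF
  split_ifs
  · exact LipschitzWith.eval _
  · exact (LipschitzWith.const 0).weaken zero_le

theorem abs_extF_le_one {k : ℕ} {y : Fin k → ℝ} (hy : y ∈ unitCube k) (m : ℕ) :
    |extF y m| ≤ 1 := by
  unfold extF
  split_ifs with h
  · exact abs_le.mpr ⟨by linarith [(hy ⟨m, h⟩).1], (hy ⟨m, h⟩).2⟩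
  · simp

theorem lipschitzOnWith_lambdaMap_unitCube (k : ℕ) : LipschitzOnWith (1 + k)
    (fun y => lambdaMap k (fun i => extF y ((i : ℕ) + 1)) (extF y 0)) (unitCube k) := by
  refine LipschitzOnWith.of_forall_apply fun i => ?_
  have hfactor : LipschitzOnWith 1 (fun y : Fin k → ℝ =>
      if (i : ℕ) < k - 1 then extF y ((i : ℕ) + 1) else 1) (unitCube k) := by
    split_ifs
    · exact (lipschitzWith_extF k _).lipschitzOnWith
    · exact ((LipschitzWith.const 1).weaken zero_le).lipschitzOnWith
  have hclamp : LipschitzOnWith k (fun y : Fin k → ℝ =>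
      max 0 (min 1 ((k : ℝ) - (i : ℕ) - k * extF y 0))) (unitCube k) := by
    refine LipschitzWith.lipschitzOnWith (.const_max (.const_min ?_ _) _)
    refine LipschitzWith.of_dist_le_mul fun y z => ?_
    rw [Real.dist_eq, show (k : ℝ) - i - k * extF y 0 - (k - i - k * extF z 0)
      = k * (extF z 0 - extF y 0) by ring, abs_mul, Nat.abs_cast, abs_sub_comm, ← Real.dist_eq]
    simpa using mul_le_mul_of_nonneg_left ((lipschitzWith_extF k 0).dist_le_mul y z) k.cast_nonneg
  have hprod := hfactor.mul_of_abs_le hclamp (Mf := 1) (Mg := 1)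
    (fun y hy => by split_ifs <;> simp [abs_extF_le_one hy])
    (fun y _ => abs_le.mpr ⟨(neg_nonpos.mpr zero_le_one).trans (le_max_left _ _),
      max_le zero_le_one (min_le_left _ _)⟩)
  rw [one_mul, one_mul] at hprod
  exact hprod

theorem lipschitzOnWith_ThetaCube (k : ℕ) :
    LipschitzOnWith (1 + k) (ThetaCube k) (unitCube k) := by
  have hcomp :=
    (lipschitzWith_piMap k).comp_lipschitzOnWith (lipschitzOnWith_lambdaMap_unitCube k)
  rwa [one_mul] at hcomp

theorem unitCube_eq_pi (k : ℕ) : unitCube k = univ.pi fun _ => Icc 0 1 :=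
  Set.ext fun y => by simp only [unitCube, Set.mem_ofPred_eq, Set.mem_univ_pi]

theorem convex_unitCube (k : ℕ) : Convex ℝ (unitCube k) :=
  unitCube_eq_pi k ▸ convex_pi fun _ _ => convex_Icc 0 1

theorem ae_differentiableAt_ThetaCube (k : ℕ) :
    ∀ᵐ y ∂volume.restrict (unitCube k), DifferentiableAt ℝ (ThetaCube k) y :=
  (lipschitzOnWith_ThetaCube k).ae_differentiableAt_of_convex volume (convex_unitCube k)

end Lipschitz

section igusaAffine

/-- `(t, x) ↦ (x_1, …, x_{k-1}, -k t)` for `k = n + 1`: rotating the rows of `diag(-k, 1, …, 1)`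
exhibits its determinant. -/
def igusaLinear (n : ℕ) : (Fin (n + 1) → ℝ) →ₗ[ℝ] Fin (n + 1) → ℝ :=
  Matrix.toLin' ((Matrix.diagonal (Function.update 1 0 (-(n + 1 : ℝ)))).submatrix
    (finRotate (n + 1)) id)

def igusaAffine (n : ℕ) (y : Fin (n + 1) → ℝ) : Fin (n + 1) → ℝ :=
  igusaLinear n y + Pi.single (Fin.last n) 1

variable {n : ℕ}

theorem igusaLinear_apply (y : Fin (n + 1) → ℝ) :
    igusaLinear n y = Fin.snoc (α := fun _ => ℝ) (Fin.tail y) (-(n + 1) * y 0) := by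
  ext i
  induction i using Fin.lastCases with
  | last => simp [igusaLinear, Matrix.mulVec, dotProduct, Matrix.diagonal_apply]
  | cast i => simp [igusaLinear, Matrix.mulVec, dotProduct, Matrix.diagonal_apply, Fin.tail]

theorem det_igusaLinear : LinearMap.det (igusaLinear n) = (-1) ^ (n + 1) * (n + 1) := by
  rw [igusaLinear, LinearMap.det_toLin', Matrix.det_permute, Matrix.det_diagonal, sign_finRotate]
  simp [Finset.prod_update_of_mem]
  ring

theorem det_igusaLinear_ne_zero : LinearMap.det (igusaLinear n) ≠ 0 := by
  rw [det_igusaLinear]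
  exact mul_ne_zero (pow_ne_zero _ (by norm_num)) (by positivity)

@[simp]
theorem igusaAffine_castSucc (y : Fin (n + 1) → ℝ) (i : Fin n) :
    igusaAffine n y i.castSucc = y i.succ := by
  simp [igusaAffine, igusaLinear_apply, Fin.tail, Fin.castSucc_ne_last]

@[simp]
theorem igusaAffine_last (y : Fin (n + 1) → ℝ) :
    igusaAffine n y (Fin.last n) = 1 - (n + 1) * y 0 := by
  simp [igusaAffine, igusaLinear_apply]
  ring

theorem hasFDerivAt_igusaAffine (y : Fin (n + 1) → ℝ) :
    HasFDerivAt (igusaAffine n) (LinearMap.toContinuousLinearMap (igusaLinear n)) y :=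
  (LinearMap.toContinuousLinearMap (igusaLinear n)).hasFDerivAt.add_const _

theorem continuous_igusaAffine : Continuous (igusaAffine n) :=
  continuous_iff_continuousAt.mpr fun y => (hasFDerivAt_igusaAffine y).continuousAt

theorem bijective_igusaAffine : Function.Bijective (igusaAffine n) :=
  (Equiv.addRight _).bijective.comp ((Module.End.isUnit_iff _).mp
    ((LinearMap.isUnit_iff_isUnit_det _).mpr (isUnit_iff_ne_zero.mpr det_igusaLinear_ne_zero)))

theorem ae_comp_igusaAffine {P : (Fin (n + 1) → ℝ) → Prop} (h : ∀ᵐ u, P u) :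
    ∀ᵐ y, P (igusaAffine n y) :=
  (Measure.LinearMap.quasiMeasurePreserving volume _ det_igusaLinear_ne_zero).ae
    ((measurePreserving_add_right volume _).quasiMeasurePreserving.ae h)

end igusaAffine

section ThetaCube

variable {n : ℕ}

theorem extF_zero (y : Fin (n + 1) → ℝ) : extF y 0 = y 0 := dif_pos n.succ_pos

theorem ThetaCube_eq_piMap_igusaAffine {y : Fin (n + 1) → ℝ}
    (h : igusaAffine n y (Fin.last n) ∈ Ioo 0 1) :
    ThetaCube (n + 1) y = piMap (igusaAffine n y) := by
  rw [igusaAffine_last] at h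
  show piMap (lambdaMap (n + 1) _ _) = _
  congr 1
  ext i
  induction i using Fin.lastCases with
  | last => simp [lambdaMap, extF_zero, h.1.le, h.2.le]
  | cast i =>
    have hi : (i : ℝ) + 1 ≤ n := by exact_mod_cast i.isLt
    have hclamp : 1 ≤ (n + 1 : ℝ) - i - (n + 1) * y 0 := by linarith [h.1]
    simp [lambdaMap, hclamp, extF, Fin.succ]

theorem ThetaCube_last_eq_zero {y : Fin (n + 1) → ℝ} (h : 1 < (n + 1) * y 0) :
    ThetaCube (n + 1) y (Fin.last n) = 0 := by
  show piMap (lambdaMap (n + 1) _ _) _ = 0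
  rw [piMap_last]
  simp [lambdaMap, extF_zero, h.le]

end ThetaCube

def openSimplex (k : ℕ) : Set (Fin k → ℝ) := {u | StrictAnti u ∧ ∀ i, u i ∈ Ioo 0 1}

theorem isOpen_openSimplex (k : ℕ) : IsOpen (openSimplex k) := by
  have : openSimplex k =
      (⋂ i, ⋂ j, {u | i < j → u j < u i}) ∩ ⋂ i, (fun u : Fin k → ℝ => u i) ⁻¹' Ioo 0 1 := by
    ext u
    simp [openSimplex, StrictAnti]
  rw [this]
  refine .inter (isOpen_iInter_of_finite fun i => isOpen_iInter_of_finite fun j => ?_)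
    (isOpen_iInter_of_finite fun i => isOpen_Ioo.preimage (continuous_apply i))
  by_cases hij : i < j
  · simpa [hij] using isOpen_lt (continuous_apply j) (continuous_apply i)
  · simp [hij]

theorem openSimplex_ae_eq_ordSimplex (k : ℕ) : openSimplex k =ᵐ[volume] ordSimplex k := by
  filter_upwards [ae_injective_and_apply_ne_zero_one] with u ⟨hinj, h01⟩
  refine propext ⟨fun ⟨hanti, hu⟩ => ?_, fun ⟨h0, h1, hanti⟩ => ?_⟩
  · exact ⟨fun i => (hu i).1.le, fun i => (hu i).2.le, fun i j hij => hanti.antitone hij⟩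
  · exact ⟨Antitone.strictAnti_of_injective (fun i j hij => hanti i j hij) hinj, fun i =>
      ⟨(h0 i).lt_of_ne' (h01 i).1, (h1 i).lt_of_ne (h01 i).2⟩⟩

section goodSet

variable {n : ℕ}

theorem isOpen_preimage_openSimplex : IsOpen (igusaAffine n ⁻¹' openSimplex (n + 1)) :=
  (isOpen_openSimplex _).preimage continuous_igusaAffine

theorem preimage_openSimplex_subset_unitCube :
    igusaAffine n ⁻¹' openSimplex (n + 1) ⊆ unitCube (n + 1) := by
  rintro y ⟨-, hy⟩ i
  induction i using Fin.cases with
  | zero =>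
    have hlast := hy (Fin.last n)
    rw [igusaAffine_last, mem_Ioo] at hlast
    have hy0 : 0 < y 0 := by nlinarith
    exact ⟨hy0.le, by nlinarith⟩
  | succ i => simpa using Ioo_subset_Icc_self (hy i.castSucc)

theorem integral_openSimplex_eq (f : (Fin (n + 1) → ℝ) → ℝ) :
    ∫ u in openSimplex (n + 1), f u =
      ∫ y in igusaAffine n ⁻¹' openSimplex (n + 1), (n + 1) * f (igusaAffine n y) := by
  have hcov := integral_image_eq_integral_abs_det_fderiv_smul volume
    isOpen_preimage_openSimplex.measurableSet
    (fun y _ => (hasFDerivAt_igusaAffine y).hasFDerivWithinAt)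
    bijective_igusaAffine.injective.injOn f
  have habs : |(LinearMap.toContinuousLinearMap (igusaLinear n)).det| = n + 1 := by
    rw [ContinuousLinearMap.det, LinearMap.coe_toContinuousLinearMap, det_igusaLinear, abs_mul,
      abs_pow, abs_neg, abs_one, one_pow, one_mul, abs_of_pos (by positivity)]
  rw [Set.image_preimage_eq _ bijective_igusaAffine.surjective, habs] at hcov
  simp_rw [hcov, smul_eq_mul]

theorem ThetaCube_eventuallyEq_igusaAffine {y : Fin (n + 1) → ℝ}
    (hy : y ∈ igusaAffine n ⁻¹' openSimplex (n + 1)) :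
    ThetaCube (n + 1) =ᶠ[𝓝 y] igusaAffine n := by
  filter_upwards [isOpen_preimage_openSimplex.mem_nhds hy] with z hz
  rw [ThetaCube_eq_piMap_igusaAffine (hz.2 _), piMap_of_antitone hz.1.antitone]

theorem det_fderiv_ThetaCube_of_mem {y : Fin (n + 1) → ℝ}
    (hy : y ∈ igusaAffine n ⁻¹' openSimplex (n + 1)) :
    LinearMap.det (fderiv ℝ (ThetaCube (n + 1)) y).toLinearMap = (-1) ^ (n + 1) * (n + 1) := by
  rw [((hasFDerivAt_igusaAffine y).congr_of_eventuallyEq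
    (ThetaCube_eventuallyEq_igusaAffine hy)).fderiv, LinearMap.coe_toContinuousLinearMap,
    det_igusaLinear]

theorem igusaAffine_apply_mem_Ioo {y : Fin (n + 1) → ℝ} (hy : y ∈ unitCube (n + 1))
    (h01 : ∀ i, igusaAffine n y i ≠ 0 ∧ igusaAffine n y i ≠ 1)
    (hpos : 0 < igusaAffine n y (Fin.last n)) (i : Fin (n + 1)) :
    igusaAffine n y i ∈ Ioo 0 1 := by
  induction i using Fin.lastCases with
  | last =>
    refine ⟨hpos, lt_of_le_of_ne ?_ (h01 _).2⟩
    simp only [igusaAffine_last]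
    nlinarith [(hy 0).1]
  | cast i =>
    simp only [igusaAffine_castSucc]
    exact ⟨(hy _).1.lt_of_ne' (by simpa using (h01 i.castSucc).1),
      (hy _).2.lt_of_ne (by simpa using (h01 i.castSucc).2)⟩

theorem det_fderiv_ThetaCube_eq_zero {y : Fin (n + 1) → ℝ} (hy : y ∈ unitCube (n + 1))
    (hinj : Function.Injective (igusaAffine n y))
    (h01 : ∀ i, igusaAffine n y i ≠ 0 ∧ igusaAffine n y i ≠ 1)
    (hG : y ∉ igusaAffine n ⁻¹' openSimplex (n + 1)) :
    LinearMap.det (fderiv ℝ (ThetaCube (n + 1)) y).toLinearMap = 0 := by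
  rcases (h01 (Fin.last n)).1.lt_or_gt with hneg | hpos
  · have hnhds : ∀ᶠ z in 𝓝 y, 1 < (n + 1 : ℝ) * z 0 :=
      (isOpen_lt continuous_const (by fun_prop)).mem_nhds (by simp at hneg; exact hneg)
    exact det_fderiv_eq_zero_of_eventually_eq (ℓ := .proj (Fin.last n))
      (fun h => by simpa using congr($h (Pi.single (Fin.last n) 1))) 0
      (hnhds.mono fun z hz => ThetaCube_last_eq_zero hz)
  have hIoo := igusaAffine_apply_mem_Ioo hy h01 hpos
  obtain ⟨i, hi⟩ : ∃ i : Fin n, igusaAffine n y i.castSucc < igusaAffine n y i.succ := by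
    by_contra! h
    exact hG ⟨Fin.strictAnti_iff_succ_lt.mpr fun i =>
      (h i).lt_of_ne (hinj.ne Fin.castSucc_lt_succ.ne'), hIoo⟩
  have hnhds : ∀ᶠ z in 𝓝 y, igusaAffine n z (Fin.last n) ∈ Ioo 0 1 ∧
      igusaAffine n z i.castSucc < igusaAffine n z i.succ :=
    ((isOpen_Ioo.preimage ((continuous_apply _).comp continuous_igusaAffine)).inter
      (isOpen_lt ((continuous_apply _).comp continuous_igusaAffine)
        ((continuous_apply _).comp continuous_igusaAffine))).mem_nhds ⟨hIoo _, hi⟩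
  refine det_fderiv_eq_zero_of_eventually_eq
    (ℓ := .proj (R := ℝ) (φ := fun _ => ℝ) i.castSucc - .proj i.succ)
    (fun h => by simpa [Fin.castSucc_lt_succ.ne'] using congr($h (Pi.single i.castSucc (1 : ℝ))))
    0 (hnhds.mono fun z hz => ?_)
  simp [ThetaCube_eq_piMap_igusaAffine hz.1, piMap_castSucc_of_le hz.2.le]

theorem ae_det_fderiv_ThetaCube_eq_zero (n : ℕ) :
    ∀ᵐ y ∂volume.restrict (unitCube (n + 1)), y ∉ igusaAffine n ⁻¹' openSimplex (n + 1) →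
      LinearMap.det (fderiv ℝ (ThetaCube (n + 1)) y).toLinearMap = 0 := by
  rw [ae_restrict_iff' (unitCube_eq_pi _ ▸ .univ_pi fun _ => measurableSet_Icc)]
  filter_upwards [ae_comp_igusaAffine ae_injective_and_apply_ne_zero_one] with y ⟨hinj, h01⟩ hy
  exact det_fderiv_ThetaCube_eq_zero hy hinj h01

end goodSet

/-- `Θ_k : [0,1]^k → Δ_k` is differentiable at Lebesgue-almost every point of the cube, and for
every continuous `f : Δ_k → ℝ`,
`∫_{[0,1]^k} f(Θ_k(t,x))·det(DΘ_k(t,x)) dt dx = (−1)^k ∫_{Δ_k} f(u) du`;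
in particular the degree of `Θ_k` is `(−1)^k`. -/
theorem stmt14 (k : ℕ) (hk : 1 ≤ k) :
    (∀ᵐ y ∂(MeasureTheory.volume.restrict (unitCube k)),
      DifferentiableAt ℝ (ThetaCube k) y) ∧
    (∀ f : (Fin k → ℝ) → ℝ, ContinuousOn f (ordSimplex k) →
      ∫ y in unitCube k,
          f (ThetaCube k y) * LinearMap.det ((fderiv ℝ (ThetaCube k) y).toLinearMap)
        = (-1 : ℝ) ^ k * ∫ u in ordSimplex k, f u) := by
  obtain ⟨n, rfl⟩ := Nat.exists_eq_add_of_le' hk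
  refine ⟨ae_differentiableAt_ThetaCube _, fun f _ => ?_⟩
  set G := igusaAffine n ⁻¹' openSimplex (n + 1)
  have hintegrand : (fun y => f (ThetaCube (n + 1) y) *
        LinearMap.det (fderiv ℝ (ThetaCube (n + 1)) y).toLinearMap)
      =ᵐ[volume.restrict (unitCube (n + 1))]
        G.indicator fun y => (-1) ^ (n + 1) * ((n + 1) * f (igusaAffine n y)) := by
    filter_upwards [ae_det_fderiv_ThetaCube_eq_zero n] with y hy
    by_cases hyG : y ∈ G
    · rw [indicator_of_mem hyG, (ThetaCube_eventuallyEq_igusaAffine hyG).eq_of_nhds,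
        det_fderiv_ThetaCube_of_mem hyG]
      ring
    · rw [indicator_of_notMem hyG, hy hyG, mul_zero]
  rw [integral_congr_ae hintegrand,
    setIntegral_indicator isOpen_preimage_openSimplex.measurableSet,
    inter_eq_right.mpr preimage_openSimplex_subset_unitCube, integral_const_mul,
    ← integral_openSimplex_eq, setIntegral_congr_set (openSimplex_ae_eq_ordSimplex _)]
end
end
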